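/- arXiv:quant-ph/0205065 — 11 statements merged into one kernel-verified Lean document; each statement's English description precedes it below -/
import Mathlib

section
/- Let J = [[0,-1],[1,0]]. Suppose the initial qubit state is φ = (e^{iθ}/√2)·(1, i)ᵗ for some θ ∈ [0, 2π). Then for every k ∈ ℤ and every n ∈ ℤ₊, the amplitude satisfies Ψ_k^{(n)}(φ) = (-1)^n · i · J · Ψ_{-k}^{(n)}(φ). -/
noncomputable section
open Matrix

/-- `P = (1/√2)·[[1,1],[0,0]]` -/
def matP : Matrix (Fin 2) (Fin 2) ℂ := (Real.sqrt 2 : ℂ)⁻¹ • !![1, 1; 0, 0]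

/-- `Q = (1/√2)·[[0,0],[1,-1]]` -/
def matQ : Matrix (Fin 2) (Fin 2) ℂ := (Real.sqrt 2 : ℂ)⁻¹ • !![0, 0; 1, -1]

/-- `J = [[0,-1],[1,0]]` -/
def matJ : Matrix (Fin 2) (Fin 2) ℂ := !![0, -1; 1, 0]

/-- The amplitudes of the Hadamard walk: `Ψ_k^{(0)}(φ) = φ` if `k = 0` and `0` otherwise,
and `Ψ_k^{(n+1)}(φ) = Q·Ψ_{k-1}^{(n)}(φ) + P·Ψ_{k+1}^{(n)}(φ)`. -/
def Psi (φ : Fin 2 → ℂ) : ℕ → ℤ → (Fin 2 → ℂ)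
  | 0, k => if k = 0 then φ else 0
  | n+1, k => matQ.mulVec (Psi φ n (k-1)) + matP.mulVec (Psi φ n (k+1))

lemma matPJ : matP * matJ = -(matJ * matQ) := by
  simp [matP, matQ, matJ, Matrix.smul_mul, Matrix.mul_smul]
  ext i j
  fin_cases i <;> simp [Matrix.mul_apply, Fin.sum_univ_two]

lemma matQJ : matQ * matJ = -(matJ * matP) := by
  simp [matP, matQ, matJ, Matrix.smul_mul, Matrix.mul_smul]
  ext i j
  fin_cases i <;> simp [Matrix.mul_apply, Fin.sum_univ_two]

theorem lemma1_i (θ : ℝ) (hθ : θ ∈ Set.Ico (0:ℝ) (2 * Real.pi))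
    (φ : Fin 2 → ℂ)
    (hφ : φ = (Complex.exp (θ * Complex.I) / (Real.sqrt 2 : ℂ)) • ![1, Complex.I]) :
    ∀ (k : ℤ) (n : ℕ),
      Psi φ n k = ((-1 : ℂ)^n * Complex.I) • matJ.mulVec (Psi φ n (-k)) := by
  intro k n
  induction n generalizing k with
  | zero =>
    simp only [Psi, neg_eq_zero, pow_zero, one_mul]
    by_cases hk : k = 0
    · subst hk
      simp only [if_pos rfl, hφ]
      ext i
      fin_cases i <;>
        simp [matJ, mulVec, dotProduct, Fin.sum_univ_two] <;> ring_nf <;> simp [Complex.I_sq] <;> ring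
    · simp [hk, Matrix.mulVec_zero]
  | succ n ih =>
    show matQ.mulVec (Psi φ n (k-1)) + matP.mulVec (Psi φ n (k+1)) = _
    rw [ih (k-1), ih (k+1)]
    have h1 : -(k-1) = -k + 1 := by ring
    have h2 : -(k+1) = -k - 1 := by ring
    rw [h1, h2]
    rw [Matrix.mulVec_smul, Matrix.mulVec_smul, Matrix.mulVec_mulVec,
      Matrix.mulVec_mulVec, matQJ, matPJ]
    show _ = ((-1:ℂ)^(n+1) * Complex.I) • matJ.mulVec
      (matQ.mulVec (Psi φ n (-k-1)) + matP.mulVec (Psi φ n (-k+1)))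
    rw [Matrix.mulVec_add, smul_add, Matrix.mulVec_mulVec, Matrix.mulVec_mulVec]
    rw [Matrix.neg_mulVec, Matrix.neg_mulVec, smul_neg, smul_neg, pow_succ]
    module
end
end

section
/- Let J = [[0,-1],[1,0]]. Suppose the initial qubit state is φ = (e^{iθ}/√2)·(1, -i)ᵗ for some θ ∈ [0, 2π). Then for every k ∈ ℤ and every n ∈ ℤ₊, the amplitude satisfies Ψ_k^{(n)}(φ) = (-1)^n · (-i) · J · Ψ_{-k}^{(n)}(φ). -/
noncomputable section
open Matrix

theorem lemma1_ii (θ : ℝ) (hθ : θ ∈ Set.Ico (0:ℝ) (2 * Real.pi))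
    (φ : Fin 2 → ℂ)
    (hφ : φ = (Complex.exp (θ * Complex.I) / (Real.sqrt 2 : ℂ)) • ![1, -Complex.I]) :
    ∀ (k : ℤ) (n : ℕ),
      Psi φ n k = ((-1 : ℂ)^n * (-Complex.I)) • matJ.mulVec (Psi φ n (-k)) := by
  intro k n
  induction n generalizing k with
  | zero =>
    simp only [Psi, pow_zero, one_mul, neg_eq_zero]
    by_cases hk : k = 0
    · subst hk
      simp only [if_pos rfl]
      rw [hφ]
      ext i
      fin_cases i <;>
        simp [matJ, Matrix.mulVec, dotProduct, Fin.sum_univ_two, Complex.ext_iff] <;>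
        ring
    · simp [hk, Matrix.mulVec_zero]
  | succ n ih =>
    show matQ.mulVec (Psi φ n (k-1)) + matP.mulVec (Psi φ n (k+1)) = _
    rw [ih (k-1), ih (k+1)]
    have h1 : -(k-1) = -k+1 := by ring
    have h2 : -(k+1) = -k-1 := by ring
    rw [h1, h2]
    have e1 : matQ.mulVec (((-1:ℂ)^n * (-Complex.I)) • matJ.mulVec (Psi φ n (-k+1)))
        = ((-1:ℂ)^n * (-Complex.I)) • ((matQ * matJ).mulVec (Psi φ n (-k+1))) := by
      rw [Matrix.mulVec_smul, Matrix.mulVec_mulVec]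
    have e2 : matP.mulVec (((-1:ℂ)^n * (-Complex.I)) • matJ.mulVec (Psi φ n (-k-1)))
        = ((-1:ℂ)^n * (-Complex.I)) • ((matP * matJ).mulVec (Psi φ n (-k-1))) := by
      rw [Matrix.mulVec_smul, Matrix.mulVec_mulVec]
    rw [e1, e2, matQJ, matPJ]
    show _ = ((-1:ℂ)^(n+1) * (-Complex.I)) • matJ.mulVec
      (matQ.mulVec (Psi φ n (-k-1)) + matP.mulVec (Psi φ n (-k+1)))
    rw [Matrix.mulVec_add, Matrix.neg_mulVec, Matrix.neg_mulVec,
      ← Matrix.mulVec_mulVec, ← Matrix.mulVec_mulVec]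
    ext i
    simp [pow_succ]
    fin_cases i <;> simp <;> ring
end
end

section
/- If φ = (α,β)ᵗ ∈ ℂ² satisfies |α|²+|β|²=1, |α|=|β|, and α·conj(β) + conj(α)·β = 0, then the distribution of the Hadamard walk started from φ is symmetric: for every n ∈ ℤ₊ and every k ∈ ℤ, ‖Ψ_k^{(n)}(φ)‖ = ‖Ψ_{-k}^{(n)}(φ)‖. -/
noncomputable section
open Matrix

/-- The Euclidean norm of a vector in `ℂ²`. -/
def vnorm (v : Fin 2 → ℂ) : ℝ := ‖(EuclideanSpace.equiv (Fin 2) ℂ).symm v‖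

/-- The symmetry operator `S(v) = (-v₁, v₀)`. -/
def Sop (v : Fin 2 → ℂ) : Fin 2 → ℂ := ![-v 1, v 0]

lemma Sop_zero : Sop 0 = 0 := by
  funext i; fin_cases i <;> simp [Sop]

lemma Sop_add (a b : Fin 2 → ℂ) : Sop (a + b) = Sop a + Sop b := by
  funext i; fin_cases i <;> simp [Sop] <;> ring

lemma mulVec_Q_Sop (v : Fin 2 → ℂ) :
    matQ.mulVec (Sop v) = -(Sop (matP.mulVec v)) := by
  funext i
  fin_cases i <;>
    simp [matQ, matP, Sop, Matrix.mulVec, dotProduct, Fin.sum_univ_two] <;> ring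

lemma mulVec_P_Sop (v : Fin 2 → ℂ) :
    matP.mulVec (Sop v) = -(Sop (matQ.mulVec v)) := by
  funext i
  fin_cases i <;>
    simp [matQ, matP, Sop, Matrix.mulVec, dotProduct, Fin.sum_univ_two] <;> ring

lemma vnorm_eq (v : Fin 2 → ℂ) : vnorm v = Real.sqrt (‖v 0‖ ^ 2 + ‖v 1‖ ^ 2) := by
  simp [vnorm, EuclideanSpace.norm_eq, Fin.sum_univ_two]

lemma vnorm_smul (c : ℂ) (v : Fin 2 → ℂ) : vnorm (c • v) = ‖c‖ * vnorm v := by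
  rw [vnorm_eq, vnorm_eq]
  simp only [Pi.smul_apply, smul_eq_mul, norm_mul, mul_pow]
  rw [← mul_add, Real.sqrt_mul (by positivity), Real.sqrt_sq (norm_nonneg c)]

lemma vnorm_Sop (v : Fin 2 → ℂ) : vnorm (Sop v) = vnorm v := by
  rw [vnorm_eq, vnorm_eq]
  simp [Sop, add_comm]

lemma Psi_smul (φ : Fin 2 → ℂ) (c : ℂ) :
    ∀ (n : ℕ) (k : ℤ), Psi (c • φ) n k = c • Psi φ n k := by
  intro n
  induction n with
  | zero =>
      intro k
      by_cases h : k = 0 <;> simp [Psi, h]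
  | succ n ih =>
      intro k
      show matQ.mulVec (Psi (c • φ) n (k-1)) + matP.mulVec (Psi (c • φ) n (k+1)) = _
      rw [ih, ih, Matrix.mulVec_smul, Matrix.mulVec_smul, ← smul_add]
      rfl

lemma Psi_Sop (φ : Fin 2 → ℂ) :
    ∀ (n : ℕ) (k : ℤ), Psi (Sop φ) n k = ((-1 : ℂ) ^ n) • Sop (Psi φ n (-k)) := by
  intro n
  induction n with
  | zero =>
      intro k
      by_cases h : k = 0
      · simp [Psi, h]
      · simp [Psi, h, neg_eq_zero, Sop_zero]
  | succ n ih =>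
      intro k
      show matQ.mulVec (Psi (Sop φ) n (k-1)) + matP.mulVec (Psi (Sop φ) n (k+1)) = _
      rw [ih, ih, Matrix.mulVec_smul, Matrix.mulVec_smul, mulVec_Q_Sop, mulVec_P_Sop]
      have h1 : -(k-1) = -k+1 := by ring
      have h2 : -(k+1) = -k-1 := by ring
      rw [h1, h2]
      have : Psi φ (n+1) (-k)
          = matQ.mulVec (Psi φ n (-k-1)) + matP.mulVec (Psi φ n (-k+1)) := rfl
      rw [this, Sop_add, smul_add]
      rw [smul_neg, smul_neg, pow_succ]
      module

theorem symmetry_of_perp (α β : ℂ)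
    (hnorm : ‖α‖ ^ 2 + ‖β‖ ^ 2 = 1)
    (habs : ‖α‖ = ‖β‖)
    (horth : α * (starRingEnd ℂ) β + (starRingEnd ℂ) α * β = 0) :
    ∀ (n : ℕ) (k : ℤ), vnorm (Psi ![α, β] n k) = vnorm (Psi ![α, β] n (-k)) := by
  have habs2 : ‖α‖ ^ 2 = 1/2 := by rw [habs] at hnorm ⊢; linarith
  have hbabs2 : ‖β‖ ^ 2 = 1/2 := by rw [← habs]; exact habs2
  have hma : (starRingEnd ℂ) α * α = 1/2 := by
    have := Complex.normSq_eq_norm_sq α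
    rw [← Complex.normSq_eq_conj_mul_self, this, habs2]
    norm_num
  have hmb : (starRingEnd ℂ) β * β = 1/2 := by
    have := Complex.normSq_eq_norm_sq β
    rw [← Complex.normSq_eq_conj_mul_self, this, hbabs2]
    norm_num
  set c : ℂ := -2 * (starRingEnd ℂ) α * β with hc
  have hSphi : Sop ![α, β] = c • ![α, β] := by
    funext i
    fin_cases i
    · show -β = c * α
      rw [hc]
      have : -2 * (starRingEnd ℂ) α * β * α = -2 * ((starRingEnd ℂ) α * α) * β := by ring
      rw [this, hma]; ring
    · show α = c * β
      rw [hc]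
      have hc2 : (starRingEnd ℂ) α * β = -(α * (starRingEnd ℂ) β) := by linear_combination horth
      have : -2 * (starRingEnd ℂ) α * β * β = -2 * ((starRingEnd ℂ) α * β) * β := by ring
      rw [this, hc2]
      have : -2 * -(α * (starRingEnd ℂ) β) * β = 2 * ((starRingEnd ℂ) β * β) * α := by ring
      rw [this, hmb]; ring
  have hcnorm : ‖c‖ = 1 := by
    have : ‖c‖ = 2 * (‖α‖ * ‖β‖) := by
      rw [hc]; simp only [norm_mul, norm_neg, Complex.norm_conj,
        Complex.norm_ofNat]; ring
    have h2 : ‖α‖ * ‖β‖ = 1/2 := by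
      rw [habs] at *
      nlinarith [norm_nonneg β]
    rw [this, h2]
    norm_num
  intro n k
  have key : Psi (Sop ![α, β]) n k = ((-1 : ℂ) ^ n) • Sop (Psi ![α, β] n (-k)) :=
    Psi_Sop _ n k
  rw [hSphi, Psi_smul] at key
  have h1 : vnorm (c • Psi ![α, β] n k) = vnorm (Psi ![α, β] n k) := by
    rw [vnorm_smul, hcnorm, one_mul]
  rw [← h1, key, vnorm_smul]
  simp [vnorm_Sop]
end
end

section
/- If φ = (α,β)ᵗ ∈ ℂ² with |α|²+|β|²=1 satisfies E(X_n^φ) = 0 for every n ∈ ℤ₊, then |α| = |β| and α·conj(β) + conj(α)·β = 0. -/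
noncomputable section
open Matrix

/-- The expectation `E(X_n^φ) = Σ_{k ∈ ℤ} k·‖Ψ_k^{(n)}(φ)‖²`. -/
def expectation (φ : Fin 2 → ℂ) (n : ℕ) : ℝ := ∑' k : ℤ, (k : ℝ) * (vnorm (Psi φ n k))^2

lemma Psi_eq_zero (φ : Fin 2 → ℂ) : ∀ (n : ℕ) (k : ℤ), n < k.natAbs → Psi φ n k = 0
  | 0, k, h => by
    have : k ≠ 0 := by omega
    simp [Psi, this]
  | n+1, k, h => by
    rw [Psi, Psi_eq_zero φ n (k-1) (by omega), Psi_eq_zero φ n (k+1) (by omega)]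
    simp

lemma vnorm_sq (v : Fin 2 → ℂ) : vnorm v ^ 2 = ‖v 0‖ ^ 2 + ‖v 1‖ ^ 2 := by
  rw [vnorm, EuclideanSpace.norm_eq, Real.sq_sqrt (by positivity)]
  simp [Fin.sum_univ_two]

lemma expectation_eq_sum (φ : Fin 2 → ℂ) (n : ℕ) (hn : n ≤ 3) :
    expectation φ n =
      ∑ k ∈ ({-3,-2,-1,0,1,2,3} : Finset ℤ), (k : ℝ) * (vnorm (Psi φ n k))^2 := by
  refine tsum_eq_sum ?_
  intro k hk
  rw [Psi_eq_zero φ n k (by simp at hk; omega)]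
  simp [vnorm]

lemma expectation_one (α β : ℂ) :
    expectation ![α, β] 1 = -(2*(α.re*β.re + α.im*β.im)) := by
  rw [expectation_eq_sum _ 1 (by norm_num)]
  norm_num [Finset.sum_insert, Finset.mem_insert,
    vnorm_sq, Psi, matP, matQ, Matrix.mulVec, dotProduct, Fin.sum_univ_two]
  have h2 : (Real.sqrt 2)⁻¹ ^ 2 = 1/2 := by
    rw [← Real.sqrt_inv, Real.sq_sqrt] <;> norm_num
  simp only [← Complex.ofReal_inv, Complex.sq_norm, Complex.normSq_apply]
  simp only [Complex.add_re, Complex.add_im, Complex.neg_re, Complex.neg_im,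
    Complex.mul_re, Complex.mul_im, Complex.ofReal_re, Complex.ofReal_im]
  ring_nf
  rw [h2]; ring

lemma expectation_three (α β : ℂ) :
    expectation ![α, β] 3 =
      -(1/2)*(α.re^2+α.im^2-β.re^2-β.im^2) - 2*(α.re*β.re+α.im*β.im) := by
  rw [expectation_eq_sum _ 3 (by norm_num)]
  norm_num [Finset.sum_insert, Finset.mem_insert,
    vnorm_sq, Psi, matP, matQ, Matrix.mulVec, dotProduct, Fin.sum_univ_two]
  have h2 : (Real.sqrt 2)⁻¹ ^ 2 = 1/2 := by
    rw [← Real.sqrt_inv, Real.sq_sqrt] <;> norm_num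
  simp only [mul_pow, ← Complex.ofReal_inv, Complex.sq_norm, Complex.normSq_apply,
    abs_of_nonneg (Real.sqrt_nonneg 2)]
  simp only [Complex.add_re, Complex.add_im, Complex.sub_re, Complex.sub_im,
    Complex.neg_re, Complex.neg_im,
    Complex.mul_re, Complex.mul_im, Complex.ofReal_re, Complex.ofReal_im]
  ring_nf
  have h4 : (Real.sqrt 2)⁻¹ ^ 4 = 1/4 := by
    rw [show ((Real.sqrt 2)⁻¹ ^ 4 : ℝ) = ((Real.sqrt 2)⁻¹ ^ 2)^2 by ring, h2]; norm_num
  have h6 : (Real.sqrt 2)⁻¹ ^ 6 = 1/8 := by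
    rw [show ((Real.sqrt 2)⁻¹ ^ 6 : ℝ) = ((Real.sqrt 2)⁻¹ ^ 2)^3 by ring, h2]; norm_num
  simp only [h2, h4, h6]
  ring

theorem zero_mean_implies_perp (α β : ℂ)
    (hnorm : ‖α‖ ^ 2 + ‖β‖ ^ 2 = 1)
    (hmean : ∀ n : ℕ, expectation ![α, β] n = 0) :
    ‖α‖ = ‖β‖ ∧
      α * (starRingEnd ℂ) β + (starRingEnd ℂ) α * β = 0 := by
  have e1 := hmean 1
  have e3 := hmean 3
  rw [expectation_one] at e1
  rw [expectation_three] at e3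
  constructor
  · have hsq : ‖α‖ ^ 2 = ‖β‖ ^ 2 := by
      rw [Complex.sq_norm, Complex.sq_norm, Complex.normSq_apply, Complex.normSq_apply]
      nlinarith [e1, e3]
    calc ‖α‖ = Real.sqrt (‖α‖ ^ 2) :=
          (Real.sqrt_sq (norm_nonneg α)).symm
      _ = Real.sqrt (‖β‖ ^ 2) := by rw [hsq]
      _ = ‖β‖ := Real.sqrt_sq (norm_nonneg β)
  · apply Complex.ext <;>
      simp only [Complex.add_re, Complex.add_im, Complex.mul_re, Complex.mul_im,
        Complex.conj_re, Complex.conj_im, Complex.zero_re, Complex.zero_im] <;>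
      nlinarith [e1]
end
end

section
/- Let l ≥ 2, m ≥ 1 and n = l+m. The sum, over all words of length n over {P,Q} with exactly l letters P and m letters Q that begin with P and end with P, of the matrix products of their letters, equals (1/√2)^{n-1} · (-1)^m · [ Σ_{γ=1}^{min(l-1,m)} (-1)^γ · C(l-1,γ) · C(m-1,γ-1) ] · P, where C(·,·) denotes the binomial coefficient. -/
noncomputable section
open Matrix Finset

/-- `R = (1/√2)·[[1,-1],[0,0]]` -/
def matR : Matrix (Fin 2) (Fin 2) ℂ := (Real.sqrt 2 : ℂ)⁻¹ • !![1, -1; 0, 0]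

/-- `S = (1/√2)·[[0,0],[1,1]]` -/
def matS : Matrix (Fin 2) (Fin 2) ℂ := (Real.sqrt 2 : ℂ)⁻¹ • !![0, 0; 1, 1]

/-- `Ξ(l,m)`: the sum, over all words of length `l+m` over the alphabet `{P,Q}` with exactly
`l` letters `P` and `m` letters `Q` (a word being encoded by the set `s` of positions of its
letters `P`), of the ordered matrix product of the letters of the word. -/
def Xi (l m : ℕ) : Matrix (Fin 2) (Fin 2) ℂ :=
  ∑ s ∈ (Finset.univ : Finset (Fin (l + m))).powersetCard l,
    (List.ofFn (fun i : Fin (l + m) => if i ∈ s then matP else matQ)).prod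


-- Auxiliary development --

/-- scalar `1/√2` -/
def ca : ℂ := (Real.sqrt 2 : ℂ)⁻¹

/-- basic signed binomial sum -/
def sB (L m : ℕ) : ℂ :=
  ∑ γ ∈ Finset.range (m+1), (-1)^γ * (L.choose (γ+1)) * (m.choose γ)

def tB (L m : ℕ) : ℂ :=
  ∑ γ ∈ Finset.range (m+1), (-1)^γ * (L.choose γ) * (m.choose γ)

def uB (L m : ℕ) : ℂ :=
  ∑ γ ∈ Finset.range (m+1), (-1)^γ * (L.choose (γ+1)) * (m.choose (γ+1))

lemma tB_eq (L m : ℕ) : tB L m = 1 - uB L m := by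
  rw [tB, Finset.sum_range_succ' (fun γ => ((-1:ℂ))^γ * (L.choose γ) * (m.choose γ))]
  have h0 : ((-1:ℂ))^0 * (L.choose 0) * (m.choose 0) = 1 := by simp
  have : ∀ γ ∈ Finset.range m, ((-1:ℂ))^(γ+1) * (L.choose (γ+1)) * (m.choose (γ+1))
      = -((-1)^γ * (L.choose (γ+1)) * (m.choose (γ+1))) := by
    intro γ _; rw [pow_succ]; ring
  rw [Finset.sum_congr rfl this, Finset.sum_neg_distrib]
  have hlast : uB L m = (∑ γ ∈ Finset.range m, (-1:ℂ)^γ * (L.choose (γ+1)) * (m.choose (γ+1))) := by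
    rw [uB, Finset.sum_range_succ]
    simp [Nat.choose_succ_self]
  rw [hlast]; simp; ring

lemma tB_succ (L m : ℕ) : tB L (m+1) = 1 - sB L m - uB L m := by
  rw [tB, Finset.sum_range_succ' (fun γ => ((-1:ℂ))^γ * (L.choose γ) * ((m+1).choose γ))]
  have : ∀ γ ∈ Finset.range (m+1), ((-1:ℂ))^(γ+1) * (L.choose (γ+1)) * ((m+1).choose (γ+1))
      = -((-1)^γ * (L.choose (γ+1)) * (m.choose γ)) + -((-1)^γ * (L.choose (γ+1)) * (m.choose (γ+1))) := by
    intro γ _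
    rw [Nat.choose_succ_succ m γ, pow_succ]
    push_cast
    ring
  rw [Finset.sum_congr rfl this, Finset.sum_add_distrib, Finset.sum_neg_distrib,
    Finset.sum_neg_distrib]
  simp only [sB, uB]
  simp
  ring

lemma sB_sub (L m : ℕ) : sB (L+1) m - sB L m = tB L m := by
  rw [sB, sB, tB, ← Finset.sum_sub_distrib]
  refine Finset.sum_congr rfl fun γ _ => ?_
  rw [Nat.choose_succ_succ L γ]
  push_cast
  ring

lemma star2 (L m : ℕ) : sB (L+1) (m+1) = sB L (m+1) - 2 * sB L m + sB (L+1) m := by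
  have h1 := sB_sub L (m+1)
  have h2 := sB_sub L m
  rw [tB_succ] at h1
  rw [tB_eq] at h2
  -- h1 : sB (L+1) (m+1) - sB L (m+1) = 1 - sB L m - uB L m
  -- h2 : sB (L+1) m - sB L m = 1 - uB L m
  linear_combination h1 - h2

/-- `Ac L M` is the signed count of words -/
def Ac (L M : ℕ) : ℂ := if M = 0 then 1 else (-1)^(M-1) * sB L (M-1)

@[simp] lemma Ac_zero (L : ℕ) : Ac L 0 = 1 := rfl
lemma Ac_succ (L m : ℕ) : Ac L (m+1) = (-1)^m * sB L m := rfl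

lemma sB_zero (L : ℕ) : sB L 0 = L := by simp [sB]

lemma Ac_rec (L M : ℕ) : Ac (L+1) (M+1) = Ac L (M+1) + 2 * Ac L M - Ac (L+1) M := by
  cases M with
  | zero =>
    simp [Ac_succ, sB_zero]
    ring
  | succ M' =>
    simp only [Ac_succ]
    rw [star2]
    rw [pow_succ]
    ring

lemma Ac_left_zero (M : ℕ) (h : 1 ≤ M) : Ac 0 M = 0 := by
  obtain ⟨m, rfl⟩ := Nat.exists_eq_add_of_le h
  rw [Nat.add_comm, Ac_succ]
  have : sB 0 m = 0 := by
    rw [sB]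
    refine Finset.sum_eq_zero fun γ _ => by simp
  rw [this, mul_zero]

/-- top row `(x,y)` of the sum over words starting with `P` -/
def xv : ℕ → ℕ → ℂ × ℂ
  | _, 0 => 0
  | 0, _+1 => 0
  | 1, 1 => (ca, ca)
  | 1, _+2 => 0
  | n+2, l+1 => (ca * (xv (n+1) l).1 + ca * (xv (n+1) (l+1)).2,
                 ca * (xv (n+1) l).1 - ca * (xv (n+1) (l+1)).2)

lemma xv_zero : ∀ n l, n < l → xv n l = 0 := by
  intro n
  induction n with
  | zero => intro l h; match l, h with
            | l+1, _ => rfl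
  | succ n ih =>
    intro l h
    match n, l, h with
    | 0, l+2, _ => rfl
    | n+1, l+1, h =>
      show xv (n+2) (l+1) = 0
      rw [xv]
      have h1 : xv (n+1) l = 0 := ih l (by omega)
      have h2 : xv (n+1) (l+1) = 0 := ih (l+1) (by omega)
      rw [h1, h2]
      simp

lemma xv_closed : ∀ n l m, l + m = n + 1 →
    xv (n+1) l = (ca^(n+1) * Ac l m, ca^(n+1) * (2 * Ac (l-1) m - Ac l m)) := by
  intro n
  induction n using Nat.strong_induction_on with
  | _ n ih =>
    intro l m hlm
    match l with
    | 0 =>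
      have hm : m = n + 1 := by omega
      subst hm
      have h0 : Ac 0 (n+1) = 0 := Ac_left_zero _ (by omega)
      have hz : xv (n+1) 0 = 0 := by cases n <;> rfl
      rw [hz, h0]
      simp
      rfl
    | l+1 =>
      match n, hlm with
      | 0, hlm =>
        have hl : l = 0 := by omega
        have hm : m = 0 := by omega
        subst hl; subst hm
        show xv 1 1 = _
        rw [show xv 1 1 = (ca, ca) from rfl]
        simp [Ac_zero]
        norm_num [pow_one]
      | n'+1, hlm =>
        show xv (n'+2) (l+1) = _
        rw [xv]
        have hx : xv (n'+1) l = (ca^(n'+1) * Ac l m, ca^(n'+1) * (2 * Ac (l-1) m - Ac l m)) :=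
          ih n' (by omega) l m (by omega)
        match m with
        | 0 =>
          have hy : xv (n'+1) (l+1) = 0 := xv_zero _ _ (by omega)
          rw [hx, hy]
          have hl : l = n' + 1 := by omega
          subst hl
          simp [Ac_zero, pow_succ]
          constructor <;> ring
        | m''+1 =>
          have hy : xv (n'+1) (l+1) = (ca^(n'+1) * Ac (l+1) m'',
              ca^(n'+1) * (2 * Ac l m'' - Ac (l+1) m'')) :=
            ih n' (by omega) (l+1) m'' (by omega)
          rw [hx, hy]
          have hrec := Ac_rec l m''
          simp only [Prod.mk.injEq]
          constructor
          · show ca * (ca^(n'+1) * Ac l (m''+1)) + ca * (ca^(n'+1) * (2 * Ac l m'' - Ac (l+1) m''))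
              = ca^(n'+2) * Ac (l+1) (m''+1)
            rw [hrec, pow_succ]
            ring
          · show ca * (ca^(n'+1) * Ac l (m''+1)) - ca * (ca^(n'+1) * (2 * Ac l m'' - Ac (l+1) m''))
              = ca^(n'+2) * (2 * Ac ((l+1)-1) (m''+1) - Ac (l+1) (m''+1))
            rw [hrec, pow_succ]
            simp only [Nat.add_sub_cancel]
            ring

def WPQ {n : ℕ} (s : Finset (Fin n)) : Matrix (Fin 2) (Fin 2) ℂ :=
  (List.ofFn (fun i : Fin n => if i ∈ s then matP else matQ)).prod

lemma last_not_mem_map (n : ℕ) (s : Finset (Fin n)) :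
    Fin.last n ∉ s.map Fin.castSuccEmb := by
  intro h
  obtain ⟨i, -, hi⟩ := Finset.mem_map.mp h
  exact (Fin.castSucc_lt_last i).ne hi

lemma mem_insert_map_iff (n : ℕ) (s : Finset (Fin n)) (i : Fin n) :
    Fin.castSucc i ∈ insert (Fin.last n) (s.map Fin.castSuccEmb) ↔ i ∈ s := by
  simp only [Finset.mem_insert, Finset.mem_map]
  constructor
  · rintro (h | ⟨j, hj, hji⟩)
    · exact absurd h (Fin.castSucc_lt_last i).ne
    · rwa [show j = i from Fin.castSucc_injective n hji] at hj
  · intro h; exact Or.inr ⟨i, h, rfl⟩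

lemma mem_map_iff (n : ℕ) (s : Finset (Fin n)) (i : Fin n) :
    Fin.castSucc i ∈ s.map Fin.castSuccEmb ↔ i ∈ s := by
  simp only [Finset.mem_map]
  constructor
  · rintro ⟨j, hj, hji⟩
    rwa [show j = i from Fin.castSucc_injective n hji] at hj
  · intro h; exact ⟨i, h, rfl⟩

lemma WPQ_insert_last (n : ℕ) (s : Finset (Fin n)) :
    WPQ (insert (Fin.last n) (s.map Fin.castSuccEmb)) = WPQ s * matP := by
  show (List.ofFn (fun i : Fin (n+1) => _)).prod = _
  rw [List.ofFn_succ', List.prod_concat]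
  congr 1
  · unfold WPQ
    congr 1
    congr 1
    funext i
    rw [if_congr (mem_insert_map_iff n s i) rfl rfl]
  · simp

lemma WPQ_map (n : ℕ) (s : Finset (Fin n)) :
    WPQ (s.map Fin.castSuccEmb) = WPQ s * matQ := by
  show (List.ofFn (fun i : Fin (n+1) => _)).prod = _
  rw [List.ofFn_succ', List.prod_concat]
  congr 1
  · unfold WPQ
    congr 1
    congr 1
    funext i
    rw [if_congr (mem_map_iff n s i) rfl rfl]
  · rw [if_neg (last_not_mem_map n s)]

lemma split_sum (n l : ℕ) (f : Finset (Fin (n+1)) → Matrix (Fin 2) (Fin 2) ℂ) :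
    ∑ s ∈ (Finset.univ : Finset (Fin (n+1))).powersetCard (l+1), f s
    = (∑ s ∈ (Finset.univ : Finset (Fin n)).powersetCard l,
        f (insert (Fin.last n) (s.map Fin.castSuccEmb)))
    + ∑ s ∈ (Finset.univ : Finset (Fin n)).powersetCard (l+1), f (s.map Fin.castSuccEmb) := by
  have hU : (Finset.univ : Finset (Fin (n+1)))
      = insert (Fin.last n) ((Finset.univ : Finset (Fin n)).map Fin.castSuccEmb) := by
    rw [Fin.univ_castSuccEmb, Finset.cons_eq_insert]
  have hnm : Fin.last n ∉ (Finset.univ : Finset (Fin n)).map Fin.castSuccEmb :=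
    last_not_mem_map n _
  rw [hU, Finset.powersetCard_succ_insert hnm]
  have hdisj : Disjoint (((Finset.univ : Finset (Fin n)).map Fin.castSuccEmb).powersetCard (l+1))
      ((((Finset.univ : Finset (Fin n)).map Fin.castSuccEmb).powersetCard l).image
        (insert (Fin.last n))) := by
    rw [Finset.disjoint_left]
    intro t ht ht'
    rw [Finset.mem_powersetCard] at ht
    rw [Finset.mem_image] at ht'
    obtain ⟨u, _, rfl⟩ := ht'
    exact hnm (ht.1 (Finset.mem_insert_self _ _))
  rw [Finset.sum_union hdisj, add_comm]
  congr 1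
  · have hinj : ∀ x ∈ ((Finset.univ : Finset (Fin n)).map Fin.castSuccEmb).powersetCard l,
        ∀ y ∈ ((Finset.univ : Finset (Fin n)).map Fin.castSuccEmb).powersetCard l,
        insert (Fin.last n) x = insert (Fin.last n) y → x = y := by
      intro x hx y hy hxy
      rw [Finset.mem_powersetCard] at hx hy
      have hlx : Fin.last n ∉ x := fun h => hnm (hx.1 h)
      have hly : Fin.last n ∉ y := fun h => hnm (hy.1 h)
      rw [← Finset.erase_insert hlx, ← Finset.erase_insert hly, hxy]
    rw [Finset.sum_image hinj, Finset.powersetCard_map, Finset.sum_map]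
    refine Finset.sum_congr rfl fun s _ => ?_
    congr 1
  · rw [Finset.powersetCard_map, Finset.sum_map]
    refine Finset.sum_congr rfl fun s _ => ?_
    congr 1

/-- peel the last letter off a filtered word sum -/
lemma peel (n l : ℕ) (p : Finset (Fin (n+1)) → Prop) [DecidablePred p]
    (q1 : Finset (Fin n) → Prop) [DecidablePred q1]
    (q2 : Finset (Fin n) → Prop) [DecidablePred q2]
    (hpq1 : ∀ s ∈ (Finset.univ : Finset (Fin n)).powersetCard l,
      (p (insert (Fin.last n) (s.map Fin.castSuccEmb)) ↔ q1 s))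
    (hpq2 : ∀ s ∈ (Finset.univ : Finset (Fin n)).powersetCard (l+1),
      (p (s.map Fin.castSuccEmb) ↔ q2 s)) :
    ∑ s ∈ ((Finset.univ : Finset (Fin (n+1))).powersetCard (l+1)).filter p, WPQ s
    = (∑ s ∈ ((Finset.univ : Finset (Fin n)).powersetCard l).filter q1, WPQ s) * matP
    + (∑ s ∈ ((Finset.univ : Finset (Fin n)).powersetCard (l+1)).filter q2, WPQ s) * matQ := by
  rw [Finset.sum_filter, Finset.sum_filter, Finset.sum_filter, Finset.sum_mul, Finset.sum_mul]
  rw [split_sum n l (fun s => if p s then WPQ s else 0)]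
  congr 1
  · refine Finset.sum_congr rfl fun s hs => ?_
    rw [if_congr (hpq1 s hs) rfl rfl, WPQ_insert_last, ite_mul, zero_mul]
  · refine Finset.sum_congr rfl fun s hs => ?_
    rw [if_congr (hpq2 s hs) rfl rfl, WPQ_map, ite_mul, zero_mul]

lemma matP_eq : matP = !![ca, ca; 0, 0] := by
  rw [matP, show ((Real.sqrt 2 : ℂ))⁻¹ = ca from rfl]
  ext i j
  fin_cases i <;> fin_cases j <;> simp

lemma matQ_eq : matQ = !![0, 0; ca, -ca] := by
  rw [matQ, show ((Real.sqrt 2 : ℂ))⁻¹ = ca from rfl]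
  ext i j
  fin_cases i <;> fin_cases j <;> simp

lemma row_mul_P (x y : ℂ) : !![x, y; 0, 0] * matP = !![ca * x, ca * x; 0, 0] := by
  rw [matP_eq, Matrix.mul_fin_two]
  congr 1 <;> ring

lemma row_mul_Q (x y : ℂ) : !![x, y; 0, 0] * matQ = !![ca * y, -(ca * y); 0, 0] := by
  rw [matQ_eq, Matrix.mul_fin_two]
  congr 1 <;> ring

lemma row_add (x y z w : ℂ) : !![x, y; (0:ℂ), 0] + !![z, w; 0, 0] = !![x + z, y + w; 0, 0] := by
  ext i j
  fin_cases i <;> fin_cases j <;> simp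

lemma smul_matP (c : ℂ) : c • matP = !![c * ca, c * ca; 0, 0] := by
  rw [matP_eq]
  ext i j
  fin_cases i <;> fin_cases j <;> simp [mul_comm]

/-- sum over words starting with `P` -/
def WF (n l : ℕ) : Matrix (Fin 2) (Fin 2) ℂ :=
  ∑ s ∈ ((Finset.univ : Finset (Fin n)).powersetCard l).filter
      (fun s => ∀ i : Fin n, (i : ℕ) = 0 → i ∈ s), WPQ s

lemma WF_rec (n l : ℕ) : WF (n+1) (l+1) = WF n l * matP + WF n (l+1) * matQ := by
  refine peel n l _ _ _ ?_ ?_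
  · intro s _
    constructor
    · intro h i hi
      have h2 := h (Fin.castSucc i) (by simpa using hi)
      rcases Finset.mem_insert.mp h2 with h3 | h3
      · exfalso
        have := congrArg Fin.val h3
        simp at this
        omega
      · exact (mem_map_iff n s i).mp h3
    · intro h i hi
      rcases Nat.eq_zero_or_pos n with hn | hn
      · subst hn
        have : i = Fin.last 0 := by
          apply Fin.ext
          simpa using hi
        rw [this]
        exact Finset.mem_insert_self _ _
      · have : i = Fin.castSucc ⟨0, hn⟩ := by
          apply Fin.ext
          simpa using hi
        rw [this]
        exact Finset.mem_insert_of_mem ((mem_map_iff n s ⟨0, hn⟩).mpr (h ⟨0, hn⟩ rfl))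
  · intro s hs
    constructor
    · intro h i hi
      exact (mem_map_iff n s i).mp (h (Fin.castSucc i) (by simpa using hi))
    · intro h i hi
      rcases Nat.eq_zero_or_pos n with hn | hn
      · exfalso
        subst hn
        rw [Finset.mem_powersetCard] at hs
        have : s = ∅ := Finset.eq_empty_of_forall_notMem (fun x _ => x.elim0)
        rw [this] at hs
        simp at hs
      · have : i = Fin.castSucc ⟨0, hn⟩ := by
          apply Fin.ext
          simpa using hi
        rw [this]
        exact (mem_map_iff n s ⟨0, hn⟩).mpr (h ⟨0, hn⟩ rfl)

lemma WF_big (n l : ℕ) (h : n < l) : WF n l = 0 := by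
  rw [WF]
  have : (Finset.univ : Finset (Fin n)).powersetCard l = ∅ := by
    rw [Finset.powersetCard_eq_empty]
    simpa using h
  rw [this]
  simp

lemma WF_zero (n : ℕ) : WF (n+1) 0 = 0 := by
  rw [WF]
  rw [Finset.powersetCard_zero]
  rw [show ({∅} : Finset (Finset (Fin (n+1)))).filter _ = ∅ from ?_]
  · simp
  · rw [Finset.filter_singleton, if_neg]
    intro h
    exact absurd (h ⟨0, by omega⟩ rfl) (Finset.notMem_empty _)

lemma WF_one : WF 1 1 = matP := by
  rw [WF]
  have h1 : (Finset.univ : Finset (Fin 1)).powersetCard 1 = {Finset.univ} := by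
    have := Finset.powersetCard_self (Finset.univ : Finset (Fin 1))
    simpa using this
  rw [h1, Finset.filter_singleton, if_pos (fun i _ => Finset.mem_univ i)]
  rw [Finset.sum_singleton, WPQ]
  simp [List.ofFn_succ]

lemma mat_zero : (0 : Matrix (Fin 2) (Fin 2) ℂ) = !![0, 0; 0, 0] := by
  ext i j
  fin_cases i <;> fin_cases j <;> simp

lemma WFX : ∀ n l, WF (n+1) l = !![(xv (n+1) l).1, (xv (n+1) l).2; 0, 0] := by
  intro n
  induction n with
  | zero =>
    intro l
    match l with
    | 0 => rw [WF_zero, show xv 1 0 = 0 from rfl, mat_zero]; rfl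
    | 1 => rw [WF_one, show xv 1 1 = (ca, ca) from rfl, matP_eq]
    | l+2 => rw [WF_big 1 (l+2) (by omega), show xv 1 (l+2) = 0 from rfl, mat_zero]; rfl
  | succ n ih =>
    intro l
    match l with
    | 0 => rw [WF_zero, show xv (n+2) 0 = 0 from rfl, mat_zero]; rfl
    | l+1 =>
      rw [WF_rec (n+1) l, ih l, ih (l+1), row_mul_P, row_mul_Q, row_add, xv]
      all_goals (congr 1 <;> ring)

lemma sum_Icc_one (f : ℕ → ℂ) : ∀ M : ℕ, ∑ γ ∈ Finset.Icc 1 M, f γ = ∑ γ ∈ Finset.range M, f (γ+1)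
  | 0 => by simp
  | M+1 => by
    rw [Finset.sum_Icc_succ_top (by omega), sum_Icc_one f M, Finset.sum_range_succ]

lemma Ac_formula (a b : ℕ) :
    (-1:ℂ)^(b+1) * ∑ γ ∈ Finset.Icc 1 (min (a+1) (b+1)),
        (-1:ℂ)^γ * ((a+1).choose γ) * (b.choose (γ-1))
    = Ac (a+1) (b+1) := by
  have hsub : Finset.Icc 1 (min (a+1) (b+1)) ⊆ Finset.Icc 1 (b+1) :=
    Finset.Icc_subset_Icc_right (min_le_right _ _)
  have hzero : ∀ γ ∈ Finset.Icc 1 (b+1), γ ∉ Finset.Icc 1 (min (a+1) (b+1)) →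
      (-1:ℂ)^γ * ((a+1).choose γ) * (b.choose (γ-1)) = 0 := by
    intro γ hγ hγ'
    rw [Finset.mem_Icc] at hγ
    rw [Finset.mem_Icc] at hγ'
    have : a + 1 < γ := by omega
    rw [Nat.choose_eq_zero_of_lt this]
    simp
  rw [Finset.sum_subset hsub hzero, sum_Icc_one, Ac_succ, sB, Finset.mul_sum, Finset.mul_sum]
  refine Finset.sum_congr rfl fun γ _ => ?_
  rw [Nat.add_sub_cancel, pow_succ, pow_succ]
  ring


theorem p_coefficient (l m : ℕ) (hl : 2 ≤ l) (hm : 1 ≤ m) :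
    ∑ s ∈ ((Finset.univ : Finset (Fin (l + m))).powersetCard l).filter
        (fun s => (⟨0, by omega⟩ : Fin (l + m)) ∈ s ∧ (⟨l + m - 1, by omega⟩ : Fin (l + m)) ∈ s),
      (List.ofFn (fun i : Fin (l + m) => if i ∈ s then matP else matQ)).prod
    = ((Real.sqrt 2 : ℂ)⁻¹ ^ (l + m - 1) * (-1 : ℂ) ^ m *
        ∑ γ ∈ Finset.Icc 1 (min (l - 1) m),
          (-1 : ℂ) ^ γ * ((l - 1).choose γ) * ((m - 1).choose (γ - 1))) • matP := by
  obtain ⟨a, rfl⟩ : ∃ a, l = a + 2 := ⟨l - 2, by omega⟩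
  obtain ⟨b, rfl⟩ : ∃ b, m = b + 1 := ⟨m - 1, by omega⟩
  have hpq1 : ∀ s ∈ (Finset.univ : Finset (Fin ((a+2)+b))).powersetCard (a+1),
      (((⟨0, by omega⟩ : Fin (((a+2)+b)+1)) ∈ insert (Fin.last ((a+2)+b)) (s.map Fin.castSuccEmb) ∧
        (⟨(a+2)+b, by omega⟩ : Fin (((a+2)+b)+1)) ∈ insert (Fin.last ((a+2)+b)) (s.map Fin.castSuccEmb))
       ↔ ∀ i : Fin ((a+2)+b), (i : ℕ) = 0 → i ∈ s) := by
    intro s _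
    constructor
    · rintro ⟨h0, -⟩
      intro i hi
      rcases Finset.mem_insert.mp h0 with h3 | h3
      · exfalso
        have := congrArg Fin.val h3
        simp [Fin.last] at this
        omega
      · obtain ⟨j, hj, hji⟩ := Finset.mem_map.mp h3
        have hj0 : (j : ℕ) = 0 := by
          have := congrArg Fin.val hji
          simpa using this
        have : i = j := Fin.ext (by omega)
        rwa [this]
    · intro h
      constructor
      · have h0 : (⟨0, by omega⟩ : Fin (((a+2)+b)+1)) = Fin.castSucc ⟨0, by omega⟩ := rfl
        rw [h0]
        exact Finset.mem_insert_of_mem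
          ((mem_map_iff _ s ⟨0, by omega⟩).mpr (h ⟨0, by omega⟩ rfl))
      · exact Finset.mem_insert_self _ _
  have hpq2 : ∀ s ∈ (Finset.univ : Finset (Fin ((a+2)+b))).powersetCard ((a+1)+1),
      (((⟨0, by omega⟩ : Fin (((a+2)+b)+1)) ∈ s.map Fin.castSuccEmb ∧
        (⟨(a+2)+b, by omega⟩ : Fin (((a+2)+b)+1)) ∈ s.map Fin.castSuccEmb) ↔ False) := by
    intro s _
    constructor
    · rintro ⟨-, hlast⟩
      exact last_not_mem_map _ s (by exact hlast)
    · exact fun h => h.elim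
  have key := peel ((a+2)+b) (a+1)
    (p := fun s : Finset (Fin (((a+2)+b)+1)) =>
      (⟨0, by omega⟩ : Fin (((a+2)+b)+1)) ∈ s ∧ (⟨(a+2)+b, by omega⟩ : Fin (((a+2)+b)+1)) ∈ s)
    (q1 := fun s : Finset (Fin ((a+2)+b)) => ∀ i : Fin ((a+2)+b), (i : ℕ) = 0 → i ∈ s)
    (q2 := fun _ => False) hpq1 hpq2
  have hlast : (⟨(a+2)+b, by omega⟩ : Fin (((a+2)+b)+1)) = Fin.last ((a+2)+b) := rfl
  rw [Finset.filter_false, Finset.sum_empty, zero_mul, add_zero] at key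
  have hWF : (∑ s ∈ ((Finset.univ : Finset (Fin ((a+2)+b))).powersetCard (a+1)).filter
      (fun s => ∀ i : Fin ((a+2)+b), (i : ℕ) = 0 → i ∈ s), WPQ s) = WF ((a+2)+b) (a+1) := rfl
  rw [hWF] at key
  have hK2 : (a+2)+b = ((a+1)+b)+1 := by omega
  have hWFX := WFX ((a+1)+b) (a+1)
  have hxv := xv_closed ((a+1)+b) (a+1) (b+1) (by omega)
  rw [hxv] at hWFX
  rw [← hK2] at hWFX
  rw [hWFX, row_mul_P] at key
  -- goal transformation
  have hsc : ca * ((ca ^ ((a+2)+b) * Ac (a+1) (b+1),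
        ca ^ ((a+2)+b) * (2 * Ac ((a+1)-1) (b+1) - Ac (a+1) (b+1))).1)
      = ((Real.sqrt 2 : ℂ)⁻¹ ^ ((a+2)+(b+1)-1) * (-1 : ℂ)^(b+1) *
        ∑ γ ∈ Finset.Icc 1 (min ((a+2)-1) (b+1)),
          (-1:ℂ)^γ * (((a+2)-1).choose γ) * (((b+1)-1).choose (γ-1))) * ca := by
    show ca * (ca ^ ((a+2)+b) * Ac (a+1) (b+1)) = _
    rw [show (a+2)+(b+1)-1 = (a+2)+b from rfl, show ((Real.sqrt 2 : ℂ))⁻¹ = ca from rfl,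
      ← Ac_formula a b, show (a+2)-1 = a+1 from rfl, show (b+1)-1 = b from rfl]
    ring
  rw [smul_matP, ← hsc]
  exact key
end
end

section
/- Let l ≥ 1, m ≥ 2 and n = l+m. The sum, over all words of length n over {P,Q} with exactly l letters P and m letters Q that begin with Q and end with Q, of the matrix products of their letters, equals −(1/√2)^{n-1} · (-1)^m · [ Σ_{γ=1}^{min(l,m-1)} (-1)^γ · C(l-1,γ-1) · C(m-1,γ) ] · Q, where C(·,·) denotes the binomial coefficient. -/
noncomputable section
open Matrix Finset

/-!
Splitting off the first letter gives `Ξ(l+1, m+1) = P Ξ(l, m+1) + Q Ξ(l+1, m)`. The second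
column of `P M` is `σ (M₀₁ + M₁₁, 0)` and that of `Q M` is `σ (0, M₀₁ - M₁₁)`, where `σ = 1/√2`,
so the second column of `Ξ(l+1, m)` obeys a Pascal-type recursion, solved by the alternating
sums `∑ₕ (-1)^(h+j) C(l,h) C(m,h+j)` for `j = 0, 1`. A word that begins and ends with `Q` is
`Q w Q` with `w` counted by `Ξ(l, m-2)`, and `Q M Q = σ (M₀₁ - M₁₁) Q`, whose coefficient is
the `(1,1)` entry of `Ξ(l, m-1)`.
-/

theorem Fin.mem_univ_map_castSucc_succ {N : ℕ} (i : Fin (N + 2)) :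
    i ∈ univ.map (Fin.castSuccEmb.trans (Fin.succEmb (N + 1))) ↔
      i ≠ 0 ∧ i ≠ Fin.last (N + 1) := by
  induction i using Fin.cases with
  | zero => simp
  | succ j =>
    induction j using Fin.lastCases with
    | last => simp
    | cast k => simp [Fin.succ_ne_zero]

section Words

variable {R : Type*} [Semiring R] (a b : R)

def wordProd {n : ℕ} (s : Finset (Fin n)) : R :=
  (List.ofFn fun i : Fin n => if i ∈ s then a else b).prod

def wordSum (n l : ℕ) : R :=
  ∑ s ∈ (univ : Finset (Fin n)).powersetCard l, wordProd a b s

theorem wordProd_map_succ {n : ℕ} (s : Finset (Fin n)) :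
    wordProd a b (s.map (Fin.succEmb n)) = b * wordProd a b s := by
  simp [wordProd, List.ofFn_succ]

theorem wordProd_insert_zero_map_succ {n : ℕ} (s : Finset (Fin n)) :
    wordProd a b (insert 0 (s.map (Fin.succEmb n))) = a * wordProd a b s := by
  simp [wordProd, List.ofFn_succ]

theorem wordProd_map_castSucc {n : ℕ} (s : Finset (Fin n)) :
    wordProd a b (s.map Fin.castSuccEmb) = wordProd a b s * b := by
  rw [wordProd, wordProd, List.ofFn_succ', List.prod_concat]
  simp

theorem wordSum_zero_right (n : ℕ) : wordSum a b n 0 = b ^ n := by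
  simp [wordSum, wordProd]

theorem wordSum_of_lt {n l : ℕ} (h : n < l) : wordSum a b n l = 0 := by
  rw [wordSum, powersetCard_eq_empty.2 (by simpa using h), sum_empty]

theorem wordSum_succ_succ (n l : ℕ) :
    wordSum a b (n + 1) (l + 1) = a * wordSum a b n l + b * wordSum a b n (l + 1) := by
  have h0 : (0 : Fin (n + 1)) ∉ univ.map (Fin.succEmb n) := by simp [Fin.succ_ne_zero]
  have hdisj : Disjoint ((univ.map (Fin.succEmb n)).powersetCard (l + 1))
      (((univ.map (Fin.succEmb n)).powersetCard l).image (insert 0)) := by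
    simp only [disjoint_left, mem_powersetCard, mem_image]
    rintro _ ⟨hs, -⟩ ⟨t, -, rfl⟩
    exact h0 (hs (mem_insert_self 0 t))
  have hinj :
      Set.InjOn (insert (0 : Fin (n + 1))) ((univ.map (Fin.succEmb n)).powersetCard l : Set _) :=
    fun t ht u hu => insert_erase_invOn.2.injOn (notMem_mono (mem_powersetCard.1 ht).1 h0)
      (notMem_mono (mem_powersetCard.1 hu).1 h0)
  have huniv : (univ : Finset (Fin (n + 1))) = insert 0 (univ.map (Fin.succEmb n)) := by
    rw [Fin.univ_succ, cons_eq_insert]; rfl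
  rw [wordSum, huniv, powersetCard_succ_insert h0, sum_union hdisj, sum_image hinj, add_comm]
  simp only [powersetCard_map, sum_map, RelEmbedding.coe_toEmbedding, mapEmbedding_apply,
    wordProd_map_succ, wordProd_insert_zero_map_succ, wordSum, mul_sum]

theorem sum_wordProd_filter_notMem_zero_last (N l : ℕ) :
    ∑ s ∈ ((univ : Finset (Fin (N + 2))).powersetCard l).filter
        (fun s => 0 ∉ s ∧ Fin.last (N + 1) ∉ s), wordProd a b s
      = b * wordSum a b N l * b := by
  have hfilter : ((univ : Finset (Fin (N + 2))).powersetCard l).filter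
      (fun s => 0 ∉ s ∧ Fin.last (N + 1) ∉ s)
        = (univ.map (Fin.castSuccEmb.trans (Fin.succEmb (N + 1)))).powersetCard l := by
    ext s
    simp only [mem_filter, mem_powersetCard, subset_iff, mem_univ, implies_true, true_and,
      Fin.mem_univ_map_castSucc_succ]
    constructor
    · rintro ⟨hcard, h0, hlast⟩
      exact ⟨fun i hi => ⟨ne_of_mem_of_not_mem hi h0, ne_of_mem_of_not_mem hi hlast⟩, hcard⟩
    · rintro ⟨hs, hcard⟩
      exact ⟨hcard, fun h => (hs h).1 rfl, fun h => (hs h).2 rfl⟩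
  rw [hfilter, powersetCard_map, sum_map, wordSum, mul_sum, sum_mul]
  refine sum_congr rfl fun t _ => ?_
  rw [RelEmbedding.coe_toEmbedding, mapEmbedding_apply, ← Finset.map_map, wordProd_map_succ,
    wordProd_map_castSucc, mul_assoc]

end Words

local notation "σ" => (Real.sqrt 2 : ℂ)⁻¹

theorem matP_mul_apply_zero_one (M : Matrix (Fin 2) (Fin 2) ℂ) :
    (matP * M) 0 1 = σ * (M 0 1 + M 1 1) := by
  simp [matP, mul_apply, Fin.sum_univ_two, mul_add]

theorem matP_mul_apply_one_one (M : Matrix (Fin 2) (Fin 2) ℂ) : (matP * M) 1 1 = 0 := by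
  simp [matP, mul_apply, Fin.sum_univ_two]

theorem matQ_mul_apply_zero_one (M : Matrix (Fin 2) (Fin 2) ℂ) : (matQ * M) 0 1 = 0 := by
  simp [matQ, mul_apply, Fin.sum_univ_two]

theorem matQ_mul_apply_one_one (M : Matrix (Fin 2) (Fin 2) ℂ) :
    (matQ * M) 1 1 = σ * (M 0 1 - M 1 1) := by
  simp [matQ, mul_apply, Fin.sum_univ_two, sub_eq_add_neg, mul_add]

theorem matQ_mul_mul_matQ (M : Matrix (Fin 2) (Fin 2) ℂ) :
    matQ * M * matQ = (σ * (M 0 1 - M 1 1)) • matQ := by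
  ext i j
  fin_cases i <;> fin_cases j <;>
    simp [matQ, mul_apply, vecMul, dotProduct, Fin.sum_univ_two] <;> ring

theorem matQ_pow_apply (m : ℕ) : (matQ ^ m) 0 1 = 0 ∧ (matQ ^ m) 1 1 = (-σ) ^ m := by
  induction m with
  | zero => simp
  | succ m ih =>
    rw [pow_succ', matQ_mul_apply_zero_one, matQ_mul_apply_one_one, ih.1, ih.2]
    exact ⟨rfl, by ring⟩

theorem Xi_eq_wordSum (l m : ℕ) : Xi l m = wordSum matP matQ (l + m) l := rfl

theorem Xi_zero_left (m : ℕ) : Xi 0 m = matQ ^ m := by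
  rw [Xi_eq_wordSum, wordSum_zero_right, zero_add]

theorem Xi_succ_zero (l : ℕ) : Xi (l + 1) 0 = matP * Xi l 0 := by
  rw [Xi_eq_wordSum, Xi_eq_wordSum, add_zero, add_zero, wordSum_succ_succ,
    wordSum_of_lt _ _ l.lt_succ_self, mul_zero, add_zero]

theorem Xi_succ_succ (l m : ℕ) :
    Xi (l + 1) (m + 1) = matP * Xi l (m + 1) + matQ * Xi (l + 1) m := by
  rw [Xi_eq_wordSum, Xi_eq_wordSum, Xi_eq_wordSum, show l + (m + 1) = l + 1 + m by omega]
  exact wordSum_succ_succ _ _ _ _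

theorem Xi_succ_apply_zero_one (l m : ℕ) :
    Xi (l + 1) m 0 1 = σ * (Xi l m 0 1 + Xi l m 1 1) := by
  cases m with
  | zero => rw [Xi_succ_zero, matP_mul_apply_zero_one]
  | succ m =>
    rw [Xi_succ_succ, Matrix.add_apply, matP_mul_apply_zero_one, matQ_mul_apply_zero_one,
      add_zero]

theorem Xi_succ_zero_apply_one_one (l : ℕ) : Xi (l + 1) 0 1 1 = 0 := by
  rw [Xi_succ_zero, matP_mul_apply_one_one]

theorem Xi_succ_succ_apply_one_one (l m : ℕ) :
    Xi (l + 1) (m + 1) 1 1 = σ * (Xi (l + 1) m 0 1 - Xi (l + 1) m 1 1) := by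
  rw [Xi_succ_succ, Matrix.add_apply, matP_mul_apply_one_one, matQ_mul_apply_one_one, zero_add]

def altChooseSum (l m j : ℕ) : ℤ :=
  ∑ h ∈ range (l + 1), (-1) ^ (h + j) * (l.choose h * m.choose (h + j) : ℤ)

theorem altChooseSum_zero_left (m : ℕ) : altChooseSum 0 m 0 = 1 := by
  simp [altChooseSum]

theorem altChooseSum_zero_succ (l j : ℕ) : altChooseSum l 0 (j + 1) = 0 := by
  simp [altChooseSum, ← add_assoc]

theorem altChooseSum_succ_succ (l m j : ℕ) :
    altChooseSum l (m + 1) (j + 1) = altChooseSum l m (j + 1) - altChooseSum l m j := by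
  rw [altChooseSum, altChooseSum, altChooseSum, ← sum_sub_distrib]
  refine sum_congr rfl fun h _ => ?_
  rw [← add_assoc, Nat.choose_succ_succ]
  push_cast
  ring

theorem altChooseSum_succ_left (l m j : ℕ) :
    altChooseSum (l + 1) m j = altChooseSum l m j + altChooseSum l m (j + 1) := by
  have hext : altChooseSum l m j
      = ∑ h ∈ range (l + 2), (-1) ^ (h + j) * (l.choose h * m.choose (h + j) : ℤ) := by
    rw [sum_range_succ, Nat.choose_succ_self]
    simp [altChooseSum]
  rw [altChooseSum, hext, altChooseSum, sum_range_succ' _ (l + 1), sum_range_succ' _ (l + 1),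
    add_right_comm, ← sum_add_distrib]
  congr 1
  · refine sum_congr rfl fun h _ => ?_
    rw [Nat.choose_succ_succ', add_right_comm h 1 j, ← add_assoc]
    push_cast
    ring
  · simp

theorem Xi_succ_apply_one_one_of_apply_zero_one {l : ℕ}
    (hx : ∀ m, Xi (l + 1) m 0 1 = σ ^ (l + 1 + m) * (-1) ^ m * altChooseSum l m 0) (m : ℕ) :
    Xi (l + 1) m 1 1 = σ ^ (l + 1 + m) * (-1) ^ m * altChooseSum l m 1 := by
  induction m with
  | zero => simp [Xi_succ_zero_apply_one_one, altChooseSum_zero_succ]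
  | succ m ih =>
    rw [Xi_succ_succ_apply_one_one, hx, ih, altChooseSum_succ_succ]
    push_cast
    ring

theorem Xi_succ_second_column (l m : ℕ) :
    Xi (l + 1) m 0 1 = σ ^ (l + 1 + m) * (-1) ^ m * altChooseSum l m 0 ∧
      Xi (l + 1) m 1 1 = σ ^ (l + 1 + m) * (-1) ^ m * altChooseSum l m 1 := by
  induction l generalizing m with
  | zero =>
    have hx : ∀ m, Xi 1 m 0 1 = σ ^ (1 + m) * (-1) ^ m * altChooseSum 0 m 0 := fun m => by
      rw [Xi_succ_apply_zero_one, Xi_zero_left, (matQ_pow_apply m).1, (matQ_pow_apply m).2,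
        altChooseSum_zero_left]
      push_cast
      ring
    exact ⟨hx m, Xi_succ_apply_one_one_of_apply_zero_one hx m⟩
  | succ l ih =>
    have hx : ∀ m, Xi (l + 2) m 0 1 = σ ^ (l + 2 + m) * (-1) ^ m * altChooseSum (l + 1) m 0 :=
      fun m => by
        rw [Xi_succ_apply_zero_one, (ih m).1, (ih m).2, altChooseSum_succ_left]
        push_cast
        ring
    exact ⟨hx m, Xi_succ_apply_one_one_of_apply_zero_one hx m⟩

theorem sum_Icc_eq_altChooseSum (l m : ℕ) :
    ∑ γ ∈ Icc 1 (min (l + 1) m), (-1 : ℂ) ^ γ * (l.choose (γ - 1)) * (m.choose γ)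
      = altChooseSum l m 1 := by
  have hvanish : ∀ γ ∈ Icc 1 (l + 1), γ ∉ Icc 1 (min (l + 1) m) →
      (-1 : ℂ) ^ γ * (l.choose (γ - 1)) * (m.choose γ) = 0 := by
    intro γ hγ hγ'
    simp only [mem_Icc] at hγ hγ'
    simp [Nat.choose_eq_zero_of_lt (show m < γ by omega)]
  rw [sum_subset (Icc_subset_Icc_right (min_le_left _ _)) hvanish, ← Ico_add_one_right_eq_Icc,
    sum_Ico_eq_sum_range, altChooseSum]
  push_cast
  refine sum_congr (by simp) fun h _ => ?_
  rw [add_comm 1 h, Nat.add_sub_cancel]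
  ring

theorem q_coefficient (l m : ℕ) (hl : 1 ≤ l) (hm : 2 ≤ m) :
    ∑ s ∈ ((Finset.univ : Finset (Fin (l + m))).powersetCard l).filter
        (fun s => (⟨0, by omega⟩ : Fin (l + m)) ∉ s ∧ (⟨l + m - 1, by omega⟩ : Fin (l + m)) ∉ s),
      (List.ofFn (fun i : Fin (l + m) => if i ∈ s then matP else matQ)).prod
    = (-((Real.sqrt 2 : ℂ)⁻¹ ^ (l + m - 1) * (-1 : ℂ) ^ m *
        ∑ γ ∈ Finset.Icc 1 (min l (m - 1)),
          (-1 : ℂ) ^ γ * ((l - 1).choose (γ - 1)) * ((m - 1).choose γ))) • matQ := by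
  obtain ⟨l, rfl⟩ : ∃ l', l = l' + 1 := ⟨l - 1, by omega⟩
  obtain ⟨k, rfl⟩ : ∃ k, m = k + 2 := ⟨m - 2, by omega⟩
  calc _ = matQ * Xi (l + 1) k * matQ :=
        sum_wordProd_filter_notMem_zero_last matP matQ (l + 1 + k) (l + 1)
    _ = Xi (l + 1) (k + 1) 1 1 • matQ := by
        rw [matQ_mul_mul_matQ, Xi_succ_succ_apply_one_one]
    _ = _ := by
        rw [(Xi_succ_second_column l (k + 1)).2, ← sum_Icc_eq_altChooseSum, Nat.add_sub_cancel,
          show k + 2 - 1 = k + 1 from rfl,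
          show l + 1 + (k + 2) - 1 = l + 1 + (k + 1) from rfl]
        congr 1
        ring
end
end

section
/- Let l ≥ 1, m ≥ 1 and n = l+m. The sum, over all words of length n over {P,Q} with exactly l letters P and m letters Q that begin with P and end with Q, of the matrix products of their letters, equals (1/√2)^{n-1} · (-1)^m · [ Σ_{γ=1}^{min(l,m)} (-1)^γ · C(l-1,γ-1) · C(m-1,γ-1) ] · R; the same sum taken over words that begin with Q and end with P equals the same scalar times S. In particular the coefficients of R and S coincide. -/
noncomputable section
open Matrix Finset


def mat : Bool → Matrix (Fin 2) (Fin 2) ℂ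
  | true => matP
  | false => matQ

def emat : Bool → Bool → Matrix (Fin 2) (Fin 2) ℂ
  | true, true => matP
  | true, false => matR
  | false, true => matS
  | false, false => matQ

def pair (a b : Bool) : ℂ := if a = false ∧ b = false then -1 else 1

lemma mat_mul_emat (a b d : Bool) :
    mat a * emat b d = ((Real.sqrt 2 : ℂ)⁻¹ * pair a b) • emat a d := by
  rcases a <;> rcases b <;> rcases d <;>
    · simp only [mat, emat, pair, matP, matQ, matR, matS]
      norm_num [Matrix.smul_mul, Matrix.mul_smul, smul_smul]
      ext i
      fin_cases i <;>
        simp [Matrix.mul_apply, Fin.sum_univ_two]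

def sgn : List Bool → ℂ
  | [] => 1
  | [_] => 1
  | a :: b :: t => (if a = false ∧ b = false then -1 else 1) * sgn (b :: t)

lemma sgn_cons_cons (a b : Bool) (t : List Bool) :
    sgn (a :: b :: t) = pair a b * sgn (b :: t) := rfl

lemma prod_eq (n : ℕ) (g : Fin (n + 1) → Bool) :
    ((List.ofFn g).map mat).prod =
      ((Real.sqrt 2 : ℂ)⁻¹ ^ n * sgn (List.ofFn g)) • emat (g 0) (g (Fin.last n)) := by
  induction n with
  | zero =>
      simp [List.ofFn_succ, sgn]
      rcases hg : g 0 <;> simp [emat, mat, hg]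
  | succ n ih =>
      have hsplit : List.ofFn g = g 0 :: List.ofFn (fun i : Fin (n+1) => g i.succ) :=
        List.ofFn_succ (f := g)
      have htail : List.ofFn (fun i : Fin (n+1) => g i.succ)
          = g 1 :: List.ofFn (fun i : Fin n => g i.succ.succ) := by
        rw [List.ofFn_succ]; rfl
      rw [hsplit, List.map_cons, List.prod_cons, ih, Matrix.mul_smul, mat_mul_emat,
        smul_smul, Fin.succ_last]
      congr 1
      have h1 : g (Fin.succ 0) = g 1 := rfl
      rw [htail, sgn_cons_cons, ← htail, h1]
      ring


def K (a b : ℕ) : ℂ := ∑ j ∈ Finset.range (a + b + 1), (-1 : ℂ) ^ j * (a.choose j) * (b.choose j)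

def K2 (a b : ℕ) : ℂ := ∑ j ∈ Finset.range (a + b + 1), (-1 : ℂ) ^ j * (a.choose (j+1)) * (b.choose j)

lemma sum_range_ext (f : ℕ → ℂ) (N M : ℕ) (h : N ≤ M) (hv : ∀ j, N ≤ j → f j = 0) :
    ∑ j ∈ Finset.range N, f j = ∑ j ∈ Finset.range M, f j := by
  apply Finset.sum_subset (Finset.range_subset_range.2 h)
  intro j _ hj
  exact hv j (by simpa using hj)

lemma K_symm (a b : ℕ) : K a b = K b a := by
  unfold K
  rw [add_comm a b]
  exact Finset.sum_congr rfl (fun j _ => by ring)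

lemma K_zero (a : ℕ) : K a 0 = 1 := by
  unfold K
  rw [Finset.sum_eq_single 0]
  · simp
  · intro j _ hj
    rcases Nat.exists_eq_succ_of_ne_zero hj with ⟨k, rfl⟩
    simp [Nat.choose_eq_zero_of_lt (Nat.succ_pos k)]
  · simp

lemma K2_zero (a : ℕ) : K2 a 0 = a := by
  unfold K2
  rw [Finset.sum_eq_single 0]
  · simp
  · intro j _ hj
    rcases Nat.exists_eq_succ_of_ne_zero hj with ⟨k, rfl⟩
    simp [Nat.choose_eq_zero_of_lt (Nat.succ_pos k)]
  · simp

lemma K2_zero_left (b : ℕ) : K2 0 b = 0 := by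
  unfold K2
  apply Finset.sum_eq_zero
  intro j _
  simp [Nat.choose_eq_zero_of_lt (Nat.succ_pos j)]

lemma K2_succ (a b : ℕ) : K2 (a+1) b = K a b + K2 a b := by
  unfold K K2
  have h1 : ∀ j ∈ Finset.range (a + 1 + b + 1), (-1:ℂ)^j * (((a+1).choose (j+1) : ℕ) : ℂ) * (b.choose j)
      = (-1:ℂ)^j * (a.choose j) * (b.choose j) + (-1:ℂ)^j * (a.choose (j+1)) * (b.choose j) := by
    intro j _
    rw [Nat.choose_succ_succ]
    push_cast
    ring
  rw [Finset.sum_congr rfl h1, Finset.sum_add_distrib]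
  congr 1
  · apply (sum_range_ext _ _ _ (by omega) _).symm
    intro j hj
    rw [Nat.choose_eq_zero_of_lt (show b < j by omega)]
    simp
  · apply (sum_range_ext _ _ _ (by omega) _).symm
    intro j hj
    rw [Nat.choose_eq_zero_of_lt (show b < j by omega)]
    simp

lemma K_succ (a b : ℕ) : K (a+1) b = K a b - K2 b a := by
  have key : ∑ j ∈ Finset.range (a+b+1), (-1:ℂ)^j * (a.choose (j+1)) * (b.choose (j+1))
      = 1 - K a b := by
    have : K a b = (∑ j ∈ Finset.range (a+b), (-1:ℂ)^(j+1) * (a.choose (j+1)) * (b.choose (j+1))) + 1 := by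
      unfold K
      rw [Finset.sum_range_succ' (fun j => (-1:ℂ)^j * (a.choose j) * (b.choose j)) (a+b)]
      simp
    rw [this]
    have ext : ∑ j ∈ Finset.range (a+b), (-1:ℂ)^j * (a.choose (j+1)) * (b.choose (j+1))
        = ∑ j ∈ Finset.range (a+b+1), (-1:ℂ)^j * (a.choose (j+1)) * (b.choose (j+1)) := by
      apply sum_range_ext _ _ _ (by omega)
      intro j hj
      rw [Nat.choose_eq_zero_of_lt (show b < j + 1 by omega)]
      simp
    rw [← ext]
    have flip : ∑ j ∈ Finset.range (a+b), (-1:ℂ)^(j+1) * (a.choose (j+1)) * (b.choose (j+1))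
        = -∑ j ∈ Finset.range (a+b), (-1:ℂ)^j * (a.choose (j+1)) * (b.choose (j+1)) := by
      rw [← Finset.sum_neg_distrib]
      exact Finset.sum_congr rfl (fun j _ => by ring)
    rw [flip]
    ring
  unfold K
  rw [show a+1+b+1 = (a+b+1)+1 by omega,
    Finset.sum_range_succ' (fun j => (-1:ℂ)^j * ((a+1).choose j) * (b.choose j)) (a+b+1)]
  have expand : ∀ j ∈ Finset.range (a+b+1),
      (-1:ℂ)^(j+1) * (((a+1).choose (j+1) : ℕ) : ℂ) * (b.choose (j+1))
      = -((-1:ℂ)^j * (b.choose (j+1)) * (a.choose j))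
        + -((-1:ℂ)^j * (a.choose (j+1)) * (b.choose (j+1))) := by
    intro j _
    rw [Nat.choose_succ_succ]
    push_cast
    ring
  rw [Finset.sum_congr rfl expand, Finset.sum_add_distrib]
  have e1 : ∑ j ∈ Finset.range (a+b+1), -((-1:ℂ)^j * ((b.choose (j+1) : ℕ) : ℂ) * (a.choose j))
      = -K2 b a := by
    unfold K2
    rw [← Finset.sum_neg_distrib, add_comm b a]
  have e2 : ∑ j ∈ Finset.range (a+b+1), -((-1:ℂ)^j * ((a.choose (j+1) : ℕ) : ℂ) * (b.choose (j+1)))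
      = -(1 - K a b) := by
    rw [Finset.sum_neg_distrib, key]
  rw [e1, e2]
  have hK : (∑ j ∈ Finset.range (a+b+1), (-1:ℂ)^j * (a.choose j) * (b.choose j)) = K a b := rfl
  rw [hK]
  simp [Nat.choose_zero_right]
  ring

def TTn : ℕ → Bool → Bool → ℕ → ℕ → ℂ
  | 0, _, _, _, _ => 0
  | 1, a, b, l, m =>
      if a = b ∧ ((a = true ∧ l = 1 ∧ m = 0) ∨ (a = false ∧ l = 0 ∧ m = 1)) then 1 else 0
  | (n+2), a, b, l, m =>
      if a = true then
        (if l = 0 then 0 else TTn (n+1) true b (l-1) m + TTn (n+1) false b (l-1) m)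
      else
        (if m = 0 then 0 else TTn (n+1) true b l (m-1) - TTn (n+1) false b l (m-1))

def CF : Bool → Bool → ℕ → ℕ → ℂ
  | true, true, l, m => if l = 0 then 0 else if m = 0 then 1 else (-1)^(m-1) * K2 (l-1) (m-1)
  | true, false, l, m => if l = 0 ∨ m = 0 then 0 else (-1)^(m-1) * K (l-1) (m-1)
  | false, true, l, m => if l = 0 ∨ m = 0 then 0 else (-1)^(m-1) * K (l-1) (m-1)
  | false, false, l, m => if m = 0 then 0 else if l = 0 then (-1)^(m-1) else (-1)^m * K2 (m-1) (l-1)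

lemma CF_true_step (b : Bool) (l m : ℕ) (hl : 1 ≤ l) (h2 : 2 ≤ l + m) :
    CF true b l m = CF true b (l-1) m + CF false b (l-1) m := by
  rcases b
  · -- b = false
    rcases Nat.eq_zero_or_pos m with hm | hm
    · subst hm
      obtain ⟨l', rfl⟩ : ∃ l', l = l' + 2 := ⟨l - 2, by omega⟩
      simp [CF]
    · obtain ⟨m', rfl⟩ : ∃ m', m = m' + 1 := ⟨m - 1, by omega⟩
      rcases Nat.lt_or_ge l 2 with hl2 | hl2
      · obtain rfl : l = 1 := by omega
        simp [CF, K_symm 0 m', K_zero]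
      · obtain ⟨l', rfl⟩ : ∃ l', l = l' + 2 := ⟨l - 2, by omega⟩
        simp only [CF]
        norm_num
        rw [K_succ l' m']
        ring
  · -- b = true
    rcases Nat.eq_zero_or_pos m with hm | hm
    · subst hm
      obtain ⟨l', rfl⟩ : ∃ l', l = l' + 2 := ⟨l - 2, by omega⟩
      simp [CF]
    · obtain ⟨m', rfl⟩ : ∃ m', m = m' + 1 := ⟨m - 1, by omega⟩
      rcases Nat.lt_or_ge l 2 with hl2 | hl2
      · obtain rfl : l = 1 := by omega
        simp [CF, K2_zero_left]
      · obtain ⟨l', rfl⟩ : ∃ l', l = l' + 2 := ⟨l - 2, by omega⟩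
        simp only [CF]
        norm_num
        rw [K2_succ l' m']
        ring

lemma CF_false_step (b : Bool) (l m : ℕ) (hm : 1 ≤ m) (h2 : 2 ≤ l + m) :
    CF false b l m = CF true b l (m-1) - CF false b l (m-1) := by
  rcases b
  · -- b = false
    rcases Nat.eq_zero_or_pos l with hl | hl
    · subst hl
      obtain ⟨m', rfl⟩ : ∃ m', m = m' + 2 := ⟨m - 2, by omega⟩
      simp [CF, pow_succ]
    · obtain ⟨l', rfl⟩ : ∃ l', l = l' + 1 := ⟨l - 1, by omega⟩
      rcases Nat.lt_or_ge m 2 with hm2 | hm2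
      · obtain rfl : m = 1 := by omega
        simp [CF, K2_zero_left]
      · obtain ⟨m', rfl⟩ : ∃ m', m = m' + 2 := ⟨m - 2, by omega⟩
        simp only [CF]
        norm_num
        rw [K2_succ m' l', K_symm m' l']
        ring
  · -- b = true
    rcases Nat.eq_zero_or_pos l with hl | hl
    · subst hl
      obtain ⟨m', rfl⟩ : ∃ m', m = m' + 2 := ⟨m - 2, by omega⟩
      simp [CF]
    · obtain ⟨l', rfl⟩ : ∃ l', l = l' + 1 := ⟨l - 1, by omega⟩
      rcases Nat.lt_or_ge m 2 with hm2 | hm2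
      · obtain rfl : m = 1 := by omega
        simp [CF, K_zero]
      · obtain ⟨m', rfl⟩ : ∃ m', m = m' + 2 := ⟨m - 2, by omega⟩
        simp only [CF]
        norm_num
        have : K l' (m'+1) = K l' m' - K2 l' m' := by
          rw [K_symm l' (m'+1), K_succ m' l', K_symm m' l']
        rw [this]
        ring

lemma TTn_eq : ∀ (n l m : ℕ), l + m = n → 1 ≤ n → ∀ (a b : Bool), TTn n a b l m = CF a b l m := by
  intro n
  induction n with
  | zero => omega
  | succ k ih =>
    intro l m h h1 a b
    match k, ih with
    | 0, _ =>
      have : (l = 1 ∧ m = 0) ∨ (l = 0 ∧ m = 1) := by omega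
      rcases this with ⟨rfl, rfl⟩ | ⟨rfl, rfl⟩ <;> rcases a <;> rcases b <;>
        simp [TTn, CF]
    | (k'+1), ih =>
      rcases a
      · -- a = false
        show (if (false : Bool) = true then _ else
          (if m = 0 then 0 else TTn (k'+1) true b l (m-1) - TTn (k'+1) false b l (m-1))) = _
        simp only [Bool.false_eq_true, if_false]
        rcases Nat.eq_zero_or_pos m with hm | hm
        · subst hm
          rcases b <;> simp [CF]
        · rw [if_neg (by omega)]
          rw [ih l (m-1) (by omega) (by omega), ih l (m-1) (by omega) (by omega)]
          exact (CF_false_step b l m hm (by omega)).symm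
      · -- a = true
        show (if (true : Bool) = true then
          (if l = 0 then 0 else TTn (k'+1) true b (l-1) m + TTn (k'+1) false b (l-1) m)
          else _) = _
        simp only [if_true]
        rcases Nat.eq_zero_or_pos l with hl | hl
        · subst hl
          rcases b <;> simp [CF]
        · rw [if_neg (by omega)]
          rw [ih (l-1) m (by omega) (by omega), ih (l-1) m (by omega) (by omega)]
          exact (CF_true_step b l m hl (by omega)).symm

lemma ofFn_cons (n : ℕ) (x : Bool) (h : Fin n → Bool) :
    List.ofFn (Fin.cons x h : Fin (n+1) → Bool) = x :: List.ofFn h := by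
  rw [List.ofFn_succ]
  congr 1

lemma sgn_cons_ofFn (n : ℕ) (x : Bool) (h : Fin (n+1) → Bool) :
    sgn (x :: List.ofFn h) = pair x (h 0) * sgn (List.ofFn h) := by
  rw [List.ofFn_succ (f := h), sgn_cons_cons, ← List.ofFn_succ (f := h)]

def WS (n : ℕ) (a b : Bool) (l : ℕ) : ℂ :=
  ∑ g : Fin (n+1) → Bool,
    if (List.ofFn g).count true = l ∧ g 0 = a ∧ g (Fin.last n) = b then sgn (List.ofFn g) else 0

lemma split_h0 (N : ℕ) (c : (Fin (N+1) → Bool) → Prop) [DecidablePred c]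
    (w : Bool → ℂ) (s : (Fin (N+1) → Bool) → ℂ) :
    (∑ h : Fin (N+1) → Bool, if c h then w (h 0) * s h else 0)
    = w true * (∑ h : Fin (N+1) → Bool, if c h ∧ h 0 = true then s h else 0)
      + w false * (∑ h : Fin (N+1) → Bool, if c h ∧ h 0 = false then s h else 0) := by
  rw [Finset.mul_sum, Finset.mul_sum, ← Finset.sum_add_distrib]
  apply Finset.sum_congr rfl
  intro h _
  rcases hh : h 0 <;> split_ifs <;> simp_all

lemma WS_eq : ∀ (n l m : ℕ) (a b : Bool), l + m = n + 1 → WS n a b l = TTn (n+1) a b l m := by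
  intro n
  induction n with
  | zero =>
    intro l m a b hlm
    unfold WS
    rw [← Equiv.sum_comp (Equiv.funUnique (Fin 1) Bool).symm]
    rw [Fintype.sum_bool]
    have : (l = 1 ∧ m = 0) ∨ (l = 0 ∧ m = 1) := by omega
    rcases this with ⟨rfl, rfl⟩ | ⟨rfl, rfl⟩ <;> rcases a <;> rcases b <;>
      simp [TTn, sgn, List.ofFn_succ, Fin.last]
  | succ n ih =>
    intro l m a b hlm
    unfold WS
    rw [← Equiv.sum_comp (Fin.consEquiv (fun _ : Fin (n+2) => Bool))]
    rw [Fintype.sum_prod_type]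
    simp only [Fin.consEquiv, Equiv.coe_fn_mk]
    have hbody : ∀ (x : Bool) (h : Fin (n+1) → Bool),
        (if (List.ofFn (Fin.cons x h : Fin (n+2) → Bool)).count true = l
            ∧ (Fin.cons x h : Fin (n+2) → Bool) 0 = a
            ∧ (Fin.cons x h : Fin (n+2) → Bool) (Fin.last (n+1)) = b
          then sgn (List.ofFn (Fin.cons x h : Fin (n+2) → Bool)) else 0)
        = (if ((List.ofFn h).count true + (if x = true then 1 else 0) = l
            ∧ h (Fin.last n) = b) ∧ x = a
          then pair x (h 0) * sgn (List.ofFn h) else 0) := by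
      intro x h
      rw [ofFn_cons]
      have h0 : (Fin.cons x h : Fin (n+2) → Bool) 0 = x := rfl
      have hlast : (Fin.cons x h : Fin (n+2) → Bool) (Fin.last (n+1)) = h (Fin.last n) := by
        rw [← Fin.succ_last, Fin.cons_succ]
      rw [h0, hlast, sgn_cons_ofFn, List.count_cons]
      simp only [beq_iff_eq]
      exact if_congr (by tauto) rfl rfl
    rw [Fintype.sum_bool]
    erw [Finset.sum_congr rfl (fun h _ => hbody true h),
        Finset.sum_congr rfl (fun h _ => hbody false h)]
    rcases a
    · -- a = false : only x = false contributes
      have hz : (∑ h : Fin (n+1) → Bool,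
          if ((List.ofFn h).count true + (if (true : Bool) = true then 1 else 0) = l
            ∧ h (Fin.last n) = b) ∧ (true : Bool) = false
          then pair true (h 0) * sgn (List.ofFn h) else 0) = 0 := by
        apply Finset.sum_eq_zero; intro h _; simp
      rw [hz, zero_add]
      rcases Nat.eq_zero_or_pos m with hm | hm
      · -- m = 0 : impossible count
        have : TTn (n+1+1) false b l m = 0 := by
          subst hm; simp [TTn]
        rw [this]
        apply Finset.sum_eq_zero
        intro h _
        rw [if_neg]
        rintro ⟨⟨hc, -⟩, -⟩
        have hlen := List.count_le_length (a := true) (l := List.ofFn h)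
        rw [List.length_ofFn] at hlen
        simp only [Bool.false_eq_true, if_false, add_zero] at hc
        omega
      · obtain ⟨m', rfl⟩ : ∃ m', m = m' + 1 := ⟨m - 1, by omega⟩
        rw [split_h0 n (fun h => ((List.ofFn h).count true + (if (false:Bool) = true then 1 else 0) = l
            ∧ h (Fin.last n) = b) ∧ (false : Bool) = false) (pair false) (fun h => sgn (List.ofFn h))]
        have e1 : (∑ h : Fin (n+1) → Bool,
            if (((List.ofFn h).count true + (if (false:Bool) = true then 1 else 0) = l
              ∧ h (Fin.last n) = b) ∧ (false : Bool) = false) ∧ h 0 = true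
            then sgn (List.ofFn h) else 0) = WS n true b l := by
          unfold WS
          exact Finset.sum_congr rfl (fun h _ => if_congr (by simp; tauto) rfl rfl)
        have e2 : (∑ h : Fin (n+1) → Bool,
            if (((List.ofFn h).count true + (if (false:Bool) = true then 1 else 0) = l
              ∧ h (Fin.last n) = b) ∧ (false : Bool) = false) ∧ h 0 = false
            then sgn (List.ofFn h) else 0) = WS n false b l := by
          unfold WS
          exact Finset.sum_congr rfl (fun h _ => if_congr (by simp; tauto) rfl rfl)
        rw [e1, e2, ih l m' true b (by omega), ih l m' false b (by omega)]
        show pair false true * _ + pair false false * _ = TTn (n+2) false b l (m'+1)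
        simp [TTn, pair]
        ring
    · -- a = true : only x = true contributes
      have hz : (∑ h : Fin (n+1) → Bool,
          if ((List.ofFn h).count true + (if (false : Bool) = true then 1 else 0) = l
            ∧ h (Fin.last n) = b) ∧ (false : Bool) = true
          then pair false (h 0) * sgn (List.ofFn h) else 0) = 0 := by
        apply Finset.sum_eq_zero; intro h _; simp
      rw [hz, add_zero]
      rcases Nat.eq_zero_or_pos l with hl | hl
      · have : TTn (n+1+1) true b l m = 0 := by
          subst hl; simp [TTn]
        rw [this]
        apply Finset.sum_eq_zero
        intro h _
        rw [if_neg]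
        rintro ⟨⟨hc, -⟩, -⟩
        simp at hc
        omega
      · obtain ⟨l', rfl⟩ : ∃ l', l = l' + 1 := ⟨l - 1, by omega⟩
        rw [split_h0 n (fun h => ((List.ofFn h).count true + (if (true:Bool) = true then 1 else 0) = l' + 1
            ∧ h (Fin.last n) = b) ∧ (true : Bool) = true) (pair true) (fun h => sgn (List.ofFn h))]
        have e1 : (∑ h : Fin (n+1) → Bool,
            if (((List.ofFn h).count true + (if (true:Bool) = true then 1 else 0) = l' + 1
              ∧ h (Fin.last n) = b) ∧ (true : Bool) = true) ∧ h 0 = true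
            then sgn (List.ofFn h) else 0) = WS n true b l' := by
          unfold WS
          exact Finset.sum_congr rfl (fun h _ => if_congr (by simp; tauto) rfl rfl)
        have e2 : (∑ h : Fin (n+1) → Bool,
            if (((List.ofFn h).count true + (if (true:Bool) = true then 1 else 0) = l' + 1
              ∧ h (Fin.last n) = b) ∧ (true : Bool) = true) ∧ h 0 = false
            then sgn (List.ofFn h) else 0) = WS n false b l' := by
          unfold WS
          exact Finset.sum_congr rfl (fun h _ => if_congr (by simp; tauto) rfl rfl)
        rw [e1, e2, ih l' m true b (by omega), ih l' m false b (by omega)]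
        show pair true true * _ + pair true false * _ = TTn (n+2) true b (l'+1) m
        simp [TTn, pair]


lemma CF_tf (l m : ℕ) (hl : l ≠ 0) (hm : m ≠ 0) :
    CF true false l m = (-1:ℂ)^(m-1) * K (l-1) (m-1) := by
  simp [CF, hl, hm]

lemma CF_ft (l m : ℕ) (hl : l ≠ 0) (hm : m ≠ 0) :
    CF false true l m = (-1:ℂ)^(m-1) * K (l-1) (m-1) := by
  simp [CF, hl, hm]

lemma prod_eq' (n : ℕ) (hn : 1 ≤ n) (g : Fin n → Bool) :
    ((List.ofFn g).map mat).prod =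
      ((Real.sqrt 2 : ℂ)⁻¹ ^ (n-1) * sgn (List.ofFn g)) •
        emat (g ⟨0, by omega⟩) (g ⟨n-1, by omega⟩) := by
  obtain ⟨N, rfl⟩ : ∃ N, n = N + 1 := ⟨n - 1, by omega⟩
  have h1 : (⟨0, by omega⟩ : Fin (N+1)) = 0 := rfl
  have h2 : (⟨N + 1 - 1, by omega⟩ : Fin (N+1)) = Fin.last N := by
    apply Fin.ext; simp
  rw [h1, h2, Nat.add_sub_cancel]
  exact prod_eq N g

lemma WS_eq' (n l m : ℕ) (a b : Bool) (h : l + m = n) (hn : 1 ≤ n) :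
    (∑ g : Fin n → Bool,
      if (List.ofFn g).count true = l ∧ g ⟨0, by omega⟩ = a ∧ g ⟨n-1, by omega⟩ = b
        then sgn (List.ofFn g) else 0) = TTn n a b l m := by
  obtain ⟨N, rfl⟩ : ∃ N, n = N + 1 := ⟨n - 1, by omega⟩
  have h1 : (⟨0, by omega⟩ : Fin (N+1)) = 0 := rfl
  have h2 : (⟨N + 1 - 1, by omega⟩ : Fin (N+1)) = Fin.last N := by
    apply Fin.ext; simp
  rw [h1, h2]
  exact WS_eq N l m a b h

lemma count_ofFn : ∀ (n : ℕ) (g : Fin n → Bool),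
    (List.ofFn g).count true = ∑ i : Fin n, if g i = true then 1 else 0 := by
  intro n
  induction n with
  | zero => intro g; simp
  | succ n ih =>
    intro g
    rw [List.ofFn_succ, List.count_cons, ih, Fin.sum_univ_succ]
    simp only [beq_iff_eq]
    omega

lemma card_eq_count (n : ℕ) (g : Fin n → Bool) :
    (List.ofFn g).count true = (Finset.univ.filter (fun i => g i = true)).card := by
  rw [count_ofFn, Finset.card_filter]

lemma sum_powersetCard {M : Type*} [AddCommMonoid M] (n l : ℕ) (F : Finset (Fin n) → M) :
    ∑ s ∈ (Finset.univ : Finset (Fin n)).powersetCard l, F s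
    = ∑ g : Fin n → Bool,
        if (List.ofFn g).count true = l
          then F (Finset.univ.filter (fun i => g i = true)) else 0 := by
  rw [← Finset.sum_filter]
  apply Finset.sum_nbij' (fun s => fun i => decide (i ∈ s))
    (fun g => Finset.univ.filter (fun i => g i = true))
  · intro s hs
    simp only [Finset.mem_filter, Finset.mem_univ, true_and]
    rw [card_eq_count] at *
    rw [Finset.mem_powersetCard_univ] at hs
    rw [← hs]
    congr 1
    ext i
    simp
  · intro g hg
    simp only [Finset.mem_filter, Finset.mem_univ, true_and] at hg
    rw [Finset.mem_powersetCard_univ, ← card_eq_count n g, hg]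
  · intro s _
    ext i
    simp
  · intro g _
    funext i
    simp
  · intro s _
    congr 1
    ext i
    simp

lemma scalar_eq (l m : ℕ) (hl : 1 ≤ l) (hm : 1 ≤ m) :
    (-1:ℂ)^m * ∑ γ ∈ Finset.Icc 1 (min l m),
        (-1:ℂ)^γ * ((l-1).choose (γ-1)) * ((m-1).choose (γ-1))
    = (-1:ℂ)^(m-1) * K (l-1) (m-1) := by
  have h1 : ∑ γ ∈ Finset.Icc 1 (min l m),
      (-1:ℂ)^γ * ((l-1).choose (γ-1)) * ((m-1).choose (γ-1))
      = ∑ j ∈ Finset.range (min l m),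
          (-1:ℂ)^(1+j) * ((l-1).choose ((1+j)-1)) * ((m-1).choose ((1+j)-1)) := by
    rw [← Finset.Ico_add_one_right_eq_Icc, Finset.sum_Ico_eq_sum_range]
    simp
  have h2 : ∑ j ∈ Finset.range (min l m),
      (-1:ℂ)^(1+j) * ((l-1).choose ((1+j)-1)) * ((m-1).choose ((1+j)-1))
      = -∑ j ∈ Finset.range (min l m), (-1:ℂ)^j * ((l-1).choose j) * ((m-1).choose j) := by
    rw [← Finset.sum_neg_distrib]
    apply Finset.sum_congr rfl
    intro j _
    rw [show (1+j)-1 = j by omega, pow_add]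
    ring
  have h3 : ∑ j ∈ Finset.range (min l m), (-1:ℂ)^j * ((l-1).choose j) * ((m-1).choose j)
      = K (l-1) (m-1) := by
    unfold K
    apply sum_range_ext _ _ _ (by omega)
    intro j hj
    have : l - 1 < j ∨ m - 1 < j := by omega
    rcases this with h | h <;> rw [Nat.choose_eq_zero_of_lt h] <;> simp
  rw [h1, h2, h3]
  obtain ⟨m', rfl⟩ : ∃ m', m = m' + 1 := ⟨m - 1, by omega⟩
  rw [pow_succ, show m'+1-1 = m' from rfl]
  ring

lemma filtered_sum (l m : ℕ) (hl : 1 ≤ l) (hm : 1 ≤ m) (a b : Bool)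
    (p : Finset (Fin (l+m)) → Prop) [DecidablePred p]
    (hp : ∀ s, p s ↔ (((⟨0, Nat.lt_of_lt_of_le hl (Nat.le_add_right l m)⟩ : Fin (l+m)) ∈ s) ↔ a = true)
        ∧ (((⟨l+m-1, Nat.sub_lt (Nat.lt_of_lt_of_le hl (Nat.le_add_right l m)) Nat.one_pos⟩ : Fin (l+m)) ∈ s) ↔ b = true)) :
    ∑ s ∈ ((Finset.univ : Finset (Fin (l+m))).powersetCard l).filter p,
      (List.ofFn (fun i : Fin (l+m) => if i ∈ s then matP else matQ)).prod
    = ((Real.sqrt 2 : ℂ)⁻¹ ^ (l+m-1) * CF a b l m) • emat a b := by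
  have hn : 1 ≤ l + m := by omega
  rw [Finset.sum_filter]
  rw [sum_powersetCard (l+m) l
    (fun s => if p s then (List.ofFn fun i : Fin (l+m) => if i ∈ s then matP else matQ).prod else 0)]
  have step : ∀ g : Fin (l+m) → Bool,
      (if (List.ofFn g).count true = l then
        (if p (Finset.univ.filter (fun i => g i = true)) then
          (List.ofFn fun i : Fin (l+m) =>
            if i ∈ Finset.univ.filter (fun i => g i = true) then matP else matQ).prod
        else 0) else 0)
      = ((Real.sqrt 2 : ℂ)⁻¹^(l+m-1) *
          (if ((List.ofFn g).count true = l ∧ g ⟨0, by omega⟩ = a ∧ g ⟨l+m-1, by omega⟩ = b)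
            then sgn (List.ofFn g) else 0)) • emat a b := by
    intro g
    by_cases hc : (List.ofFn g).count true = l
    · rw [if_pos hc]
      by_cases hp1 : p (Finset.univ.filter (fun i => g i = true))
      · rw [if_pos hp1]
        rw [hp] at hp1
        simp only [Finset.mem_filter, Finset.mem_univ, true_and] at hp1
        have ha : g ⟨0, by omega⟩ = a := by
          rcases hga : g ⟨0, by omega⟩ <;> rcases hha : a <;> simp [hga, hha] at hp1 ⊢ <;> tauto
        have hb : g ⟨l+m-1, by omega⟩ = b := by
          rcases hga : g ⟨l+m-1, by omega⟩ <;> rcases hha : b <;> simp [hga, hha] at hp1 ⊢ <;> tauto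
        have hmf : (List.ofFn fun i : Fin (l+m) =>
            if i ∈ Finset.univ.filter (fun i => g i = true) then matP else matQ)
            = (List.ofFn g).map mat := by
          rw [List.map_ofFn]
          congr 1
          funext i
          rcases hgi : g i <;> simp [hgi, mat, Function.comp]
        rw [hmf, prod_eq' (l+m) hn g, ha, hb, if_pos ⟨hc, rfl, rfl⟩]
      · rw [if_neg hp1, if_neg, mul_zero, zero_smul]
        rintro ⟨-, h1, h2⟩
        apply hp1
        rw [hp]
        simp only [Finset.mem_filter, Finset.mem_univ, true_and]
        constructor
        · rw [h1]
        · rw [h2]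
    · rw [if_neg hc, if_neg (by tauto), mul_zero, zero_smul]
  rw [Finset.sum_congr rfl (fun g _ => step g), ← Finset.sum_smul, ← Finset.mul_sum,
    WS_eq' (l+m) l m a b rfl hn, TTn_eq (l+m) l m rfl hn a b]

theorem r_and_s_coefficients (l m : ℕ) (hl : 1 ≤ l) (hm : 1 ≤ m) :
    (∑ s ∈ ((Finset.univ : Finset (Fin (l + m))).powersetCard l).filter
        (fun s => (⟨0, by omega⟩ : Fin (l + m)) ∈ s ∧ (⟨l + m - 1, by omega⟩ : Fin (l + m)) ∉ s),
      (List.ofFn (fun i : Fin (l + m) => if i ∈ s then matP else matQ)).prod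
    = ((Real.sqrt 2 : ℂ)⁻¹ ^ (l + m - 1) * (-1 : ℂ) ^ m *
        ∑ γ ∈ Finset.Icc 1 (min l m),
          (-1 : ℂ) ^ γ * ((l - 1).choose (γ - 1)) * ((m - 1).choose (γ - 1))) • matR) ∧
    (∑ s ∈ ((Finset.univ : Finset (Fin (l + m))).powersetCard l).filter
        (fun s => (⟨0, by omega⟩ : Fin (l + m)) ∉ s ∧ (⟨l + m - 1, by omega⟩ : Fin (l + m)) ∈ s),
      (List.ofFn (fun i : Fin (l + m) => if i ∈ s then matP else matQ)).prod
    = ((Real.sqrt 2 : ℂ)⁻¹ ^ (l + m - 1) * (-1 : ℂ) ^ m *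
        ∑ γ ∈ Finset.Icc 1 (min l m),
          (-1 : ℂ) ^ γ * ((l - 1).choose (γ - 1)) * ((m - 1).choose (γ - 1))) • matS) := by
  constructor
  · have h := filtered_sum l m hl hm true false
      (fun s => (⟨0, by omega⟩ : Fin (l + m)) ∈ s ∧ (⟨l + m - 1, by omega⟩ : Fin (l + m)) ∉ s)
      (by intro s; simp)
    refine h.trans ?_
    rw [CF_tf l m (by omega) (by omega), ← scalar_eq l m hl hm,
      show emat true false = matR from rfl]
    congr 1
    ring
  · have h := filtered_sum l m hl hm false true
      (fun s => (⟨0, by omega⟩ : Fin (l + m)) ∉ s ∧ (⟨l + m - 1, by omega⟩ : Fin (l + m)) ∈ s)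
      (by intro s; simp)
    refine h.trans ?_
    rw [CF_ft l m (by omega) (by omega), ← scalar_eq l m hl hm,
      show emat false true = matS from rfl]
    congr 1
    ring
end
end

section
/- Let γ ≥ 1, l ≥ 2, m ≥ 1, n = l+m, and let w_1, …, w_{2γ+1} be positive integers with w_1 + w_3 + ⋯ + w_{2γ+1} = l and w_2 + w_4 + ⋯ + w_{2γ} = m. Then the alternating block product P^{w_1} Q^{w_2} P^{w_3} ⋯ Q^{w_{2γ}} P^{w_{2γ+1}} equals (1/√2)^{n-1} · (-1)^{m+γ} · P. -/
noncomputable section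
open Matrix Finset

lemma hPP : matP * matP = (Real.sqrt 2 : ℂ)⁻¹ • matP := by
  ext i j; fin_cases i <;> fin_cases j <;>
    simp [matP, matQ, Matrix.mul_apply, Fin.sum_univ_two]
lemma hQQ : matQ * matQ = (-(Real.sqrt 2 : ℂ)⁻¹) • matQ := by
  ext i j; fin_cases i <;> fin_cases j <;>
    simp [matP, matQ, Matrix.mul_apply, Fin.sum_univ_two]
lemma hPQP : matP * (matQ * matP) = ((Real.sqrt 2 : ℂ)⁻¹ ^ 2) • matP := by
  ext i j; fin_cases i <;> fin_cases j <;>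
    simp [matP, matQ, Matrix.mul_apply, Fin.sum_univ_two] <;> ring

lemma hPpow (k : ℕ) : matP ^ (k + 1) = ((Real.sqrt 2 : ℂ)⁻¹ ^ k) • matP := by
  induction k with
  | zero => simp
  | succ k ih =>
    rw [pow_succ, ih, Algebra.smul_mul_assoc, hPP, smul_smul, pow_succ]

lemma hQpow (k : ℕ) : matQ ^ (k + 1) = ((-1 : ℂ) ^ k * (Real.sqrt 2 : ℂ)⁻¹ ^ k) • matQ := by
  induction k with
  | zero => simp
  | succ k ih =>
    rw [pow_succ, ih, Algebra.smul_mul_assoc, hQQ, smul_smul]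
    ring_nf

lemma aux (γ : ℕ) (v : ℕ → ℕ) :
    (((List.range (2 * γ + 1)).map
        (fun i => (if i % 2 = 0 then matP else matQ) ^ (v i + 1))).prod)
    = (((Real.sqrt 2 : ℂ)⁻¹ ^ (∑ i ∈ Finset.range (2 * γ + 1), v i + 2 * γ)) *
       ((-1 : ℂ) ^ (∑ i ∈ Finset.range (2 * γ + 1), if i % 2 = 1 then v i else 0))) • matP := by
  induction γ with
  | zero =>
    rw [show (2 * 0 + 1) = 1 from rfl, List.range_succ, List.range_zero]
    simp only [List.nil_append, List.map_cons, List.map_nil, List.prod_cons, List.prod_nil,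
      mul_one, Finset.sum_range_one, Nat.zero_mod, reduceIte]
    rw [hPpow]
    norm_num
  | succ γ ih =>
    rw [show 2 * (γ + 1) + 1 = (2 * γ + 1) + 1 + 1 from by ring]
    rw [List.range_succ, List.range_succ, List.map_append, List.map_append,
      List.prod_append, List.prod_append]
    rw [Finset.sum_range_succ v, Finset.sum_range_succ v,
      Finset.sum_range_succ (fun i => if i % 2 = 1 then v i else 0),
      Finset.sum_range_succ (fun i => if i % 2 = 1 then v i else 0)]
    have h1 : (2 * γ + 1) % 2 = 1 := by omega
    have h2 : (2 * γ + 1 + 1) % 2 = 0 := by omega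
    simp only [h1, h2, List.map_cons, List.map_nil, List.prod_cons, List.prod_nil, mul_one,
      reduceIte]
    rw [ih]
    norm_num
    rw [hQpow (v (2 * γ + 1)), hPpow (v (2 * γ + 2))]
    simp only [Algebra.mul_smul_comm, Algebra.smul_mul_assoc, smul_smul, mul_assoc, hPQP]
    congr 1
    ring

lemma cnt1 (n : ℕ) : (∑ i ∈ Finset.range n, if i % 2 = 1 then 1 else 0) = n / 2 := by
  induction n with
  | zero => simp
  | succ n ih => rw [Finset.sum_range_succ, ih]; split <;> omega

lemma cnt0 (n : ℕ) : (∑ i ∈ Finset.range n, if i % 2 = 0 then 1 else 0) = (n + 1) / 2 := by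
  induction n with
  | zero => simp
  | succ n ih => rw [Finset.sum_range_succ, ih]; split <;> omega

/-- The alternating block product `P^{w_1} Q^{w_2} P^{w_3} ⋯ Q^{w_{2γ}} P^{w_{2γ+1}}`
(the block with 0-based index `i` is a power of `P` if `i` is even, of `Q` if `i` is odd). -/
theorem alternating_block_product_P (γ l m : ℕ) (hγ : 1 ≤ γ) (hl : 2 ≤ l) (hm : 1 ≤ m)
    (w : Fin (2 * γ + 1) → ℕ) (hw : ∀ i, 1 ≤ w i)
    (hP : ∑ i ∈ Finset.univ.filter (fun i : Fin (2 * γ + 1) => i.val % 2 = 0), w i = l)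
    (hQ : ∑ i ∈ Finset.univ.filter (fun i : Fin (2 * γ + 1) => i.val % 2 = 1), w i = m) :
    (List.ofFn (fun i : Fin (2 * γ + 1) =>
        (if i.val % 2 = 0 then matP else matQ) ^ (w i))).prod
    = ((Real.sqrt 2 : ℂ)⁻¹ ^ (l + m - 1) * (-1 : ℂ) ^ (m + γ)) • matP := by
  classical
  set v : ℕ → ℕ := fun i => if h : i < 2 * γ + 1 then w ⟨i, h⟩ - 1 else 0 with hv
  have hwv : ∀ i : Fin (2 * γ + 1), w i = v i.val + 1 := by
    intro i
    have := hw i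
    simp only [hv, i.isLt, dif_pos, Fin.eta]
    omega
  have hlist : (List.ofFn (fun i : Fin (2 * γ + 1) =>
      (if i.val % 2 = 0 then matP else matQ) ^ (w i)))
      = (List.range (2 * γ + 1)).map
        (fun i => (if i % 2 = 0 then matP else matQ) ^ (v i + 1)) := by
    rw [List.ofFn_eq_map, ← List.map_coe_finRange_eq_range, List.map_map]
    exact List.map_congr_left (fun i _ => by rw [Function.comp_apply, hwv i])
  rw [hlist, aux γ v]
  have hP' : ∑ i ∈ Finset.range (2 * γ + 1), (if i % 2 = 0 then v i + 1 else 0) = l := by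
    rw [← hP, Finset.sum_filter,
      ← Fin.sum_univ_eq_sum_range (fun i => if i % 2 = 0 then v i + 1 else 0) (2 * γ + 1)]
    exact Finset.sum_congr rfl (fun i _ => by rw [hwv i])
  have hQ' : ∑ i ∈ Finset.range (2 * γ + 1), (if i % 2 = 1 then v i + 1 else 0) = m := by
    rw [← hQ, Finset.sum_filter,
      ← Fin.sum_univ_eq_sum_range (fun i => if i % 2 = 1 then v i + 1 else 0) (2 * γ + 1)]
    exact Finset.sum_congr rfl (fun i _ => by rw [hwv i])
  have e0 : ∑ i ∈ Finset.range (2 * γ + 1), (if i % 2 = 0 then v i + 1 else 0)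
      = (∑ i ∈ Finset.range (2 * γ + 1), if i % 2 = 0 then v i else 0)
        + (∑ i ∈ Finset.range (2 * γ + 1), if i % 2 = 0 then 1 else 0) := by
    rw [← Finset.sum_add_distrib]
    exact Finset.sum_congr rfl (fun i _ => by split <;> simp)
  have e1 : ∑ i ∈ Finset.range (2 * γ + 1), (if i % 2 = 1 then v i + 1 else 0)
      = (∑ i ∈ Finset.range (2 * γ + 1), if i % 2 = 1 then v i else 0)
        + (∑ i ∈ Finset.range (2 * γ + 1), if i % 2 = 1 then 1 else 0) := by
    rw [← Finset.sum_add_distrib]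
    exact Finset.sum_congr rfl (fun i _ => by split <;> simp)
  have esplit : ∑ i ∈ Finset.range (2 * γ + 1), v i
      = (∑ i ∈ Finset.range (2 * γ + 1), if i % 2 = 0 then v i else 0)
        + (∑ i ∈ Finset.range (2 * γ + 1), if i % 2 = 1 then v i else 0) := by
    rw [← Finset.sum_add_distrib]
    refine Finset.sum_congr rfl (fun i _ => ?_)
    rcases Nat.even_or_odd i with h | h
    · have : i % 2 = 0 := Nat.even_iff.mp h
      simp [this]
    · have : i % 2 = 1 := Nat.odd_iff.mp h
      simp [this]
  rw [cnt0] at e0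
  rw [cnt1] at e1
  have hc0 : (2 * γ + 1 + 1) / 2 = γ + 1 := by omega
  have hc1 : (2 * γ + 1) / 2 = γ := by omega
  rw [hc0] at e0; rw [hc1] at e1
  set B := ∑ i ∈ Finset.range (2 * γ + 1), if i % 2 = 1 then v i else 0 with hB
  have eA : ∑ i ∈ Finset.range (2 * γ + 1), v i + 2 * γ = l + m - 1 := by omega
  have eB : m + γ = B + 2 * γ := by omega
  rw [eA, eB, pow_add, pow_mul]
  norm_num
end
end

section
/- Let l, m ≥ 1 and n = l+m. Then ᵗΞ(l,m)·Ξ(l,m) = (1/2)^n · Σ_{γ=1}^{min(l,m)} Σ_{δ=1}^{min(l,m)} ((-1)^{γ+δ}/(γδ)) · C(l-1,γ-1) · C(l-1,δ-1) · C(m-1,γ-1) · C(m-1,δ-1) · [[ l² + (m-2γ)(m-2δ), l(l-2γ) − m(m-2δ) ], [ l(l-2δ) − m(m-2γ), m² + (l-2γ)(l-2δ) ]], where ᵗA denotes the transpose of A and C(·,·) the binomial coefficient. -/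
noncomputable section
open Matrix Finset

def W (n k : ℕ) : Matrix (Fin 2) (Fin 2) ℂ :=
  ∑ s ∈ (Finset.univ : Finset (Fin n)).powersetCard k,
    (List.ofFn (fun i : Fin n => if i ∈ s then matP else matQ)).prod

lemma W_zero (n : ℕ) : W n 0 = matQ ^ n := by
  simp only [W, Finset.powersetCard_zero, Finset.sum_singleton, Finset.notMem_empty,
    if_false, List.ofFn_const, List.prod_replicate]

lemma W_self (n : ℕ) : W n n = matP ^ n := by
  have : (Finset.univ : Finset (Fin n)).powersetCard n = {Finset.univ} := by
    have := Finset.powersetCard_self (Finset.univ : Finset (Fin n))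
    simpa using this
  simp only [W, this, Finset.sum_singleton, Finset.mem_univ, if_true, List.ofFn_const,
    List.prod_replicate]

lemma prodQ (n : ℕ) (t : Finset (Fin n)) :
    (List.ofFn fun i : Fin (n+1) => if i ∈ t.map (Fin.succEmb n) then matP else matQ).prod
      = matQ * (List.ofFn fun i : Fin n => if i ∈ t then matP else matQ).prod := by
  rw [List.ofFn_succ, List.prod_cons]
  congr 1
  · rw [if_neg]
    simp [Fin.succ_ne_zero, Fin.succEmb]
  · congr 1
    have : ∀ i : Fin n, i.succ ∈ t.map (Fin.succEmb n) ↔ i ∈ t := fun i =>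
      Finset.mem_map' (Fin.succEmb n)
    simp only [this]

lemma prodP (n : ℕ) (t : Finset (Fin n)) :
    (List.ofFn fun i : Fin (n+1) =>
        if i ∈ insert 0 (t.map (Fin.succEmb n)) then matP else matQ).prod
      = matP * (List.ofFn fun i : Fin n => if i ∈ t then matP else matQ).prod := by
  rw [List.ofFn_succ, List.prod_cons]
  congr 1
  · rw [if_pos (Finset.mem_insert_self _ _)]
  · congr 1
    have : ∀ i : Fin n, (i.succ ∈ insert 0 (t.map (Fin.succEmb n))) ↔ i ∈ t := by
      intro i
      rw [Finset.mem_insert]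
      simp [Fin.succ_ne_zero, Finset.mem_map' (Fin.succEmb n)]
    simp only [this]

lemma W_succ (n k : ℕ) : W (n+1) (k+1) = matP * W n k + matQ * W n (k+1) := by
  classical
  have huniv : (Finset.univ : Finset (Fin (n+1)))
      = insert 0 (Finset.univ.map (Fin.succEmb n)) := by
    rw [Fin.univ_succ, Finset.cons_eq_insert]
    rfl
  have h0 : (0 : Fin (n+1)) ∉ Finset.univ.map (Fin.succEmb n) := by
    simp [Fin.succEmb, Fin.succ_ne_zero]
  have hdisj : Disjoint
      ((Finset.univ.map (Fin.succEmb n)).powersetCard (k+1))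
      (Finset.image (insert 0) ((Finset.univ.map (Fin.succEmb n)).powersetCard k)) := by
    rw [Finset.disjoint_left]
    intro s hs hs'
    rw [Finset.mem_powersetCard] at hs
    rw [Finset.mem_image] at hs'
    obtain ⟨t, ht, rfl⟩ := hs'
    exact h0 (hs.1 (Finset.mem_insert_self 0 t))
  have hinj : ∀ x ∈ (Finset.univ.map (Fin.succEmb n)).powersetCard k,
      ∀ y ∈ (Finset.univ.map (Fin.succEmb n)).powersetCard k,
      insert 0 x = insert 0 y → x = y := by
    intro x hx y hy hxy
    have hx0 : (0 : Fin (n+1)) ∉ x := fun h => h0 ((Finset.mem_powersetCard.mp hx).1 h)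
    have hy0 : (0 : Fin (n+1)) ∉ y := fun h => h0 ((Finset.mem_powersetCard.mp hy).1 h)
    rw [← Finset.erase_insert hx0, ← Finset.erase_insert hy0, hxy]
  rw [W, huniv, Finset.powersetCard_succ_insert h0, Finset.sum_union hdisj, add_comm]
  congr 1
  · rw [Finset.sum_image hinj, Finset.powersetCard_map, Finset.sum_map, W, Finset.mul_sum]
    refine Finset.sum_congr rfl fun t _ => ?_
    exact prodP n t
  · rw [Finset.powersetCard_map, Finset.sum_map, W, Finset.mul_sum]
    refine Finset.sum_congr rfl fun t _ => ?_
    exact prodQ n t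


def a1 (p q j : ℕ) : ℂ := (-1)^(j+q) * ((p+1).choose (j+1)) * (q.choose j)
def a2 (p q j : ℕ) : ℂ := (-1)^(j+q) * ((p.choose (j+1) : ℂ) - p.choose j) * (q.choose j)
def a3 (p q j : ℕ) : ℂ := (-1)^(j+q) * (p.choose j) * ((q.choose j : ℂ) - q.choose (j+1))
def a4 (p q j : ℕ) : ℂ := (-1)^(j+q) * (p.choose j) * ((q+1).choose (j+1))

def A1 (p q N : ℕ) : ℂ := ∑ j ∈ Finset.range N, a1 p q j
def A2 (p q N : ℕ) : ℂ := ∑ j ∈ Finset.range N, a2 p q j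
def A3 (p q N : ℕ) : ℂ := ∑ j ∈ Finset.range N, a3 p q j
def A4 (p q N : ℕ) : ℂ := ∑ j ∈ Finset.range N, a4 p q j

lemma choose_cast_zero {n k : ℕ} (h : n < k) : ((n.choose k : ℕ) : ℂ) = 0 := by
  rw [Nat.choose_eq_zero_of_lt h]; norm_num

lemma a1_vanish (p q j : ℕ) (h : min p q < j) : a1 p q j = 0 := by
  rcases min_lt_iff.mp h with h' | h' <;>
    simp [a1, choose_cast_zero h', choose_cast_zero (Nat.succ_lt_succ h')]

lemma a2_vanish (p q j : ℕ) (h : min p q < j) : a2 p q j = 0 := by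
  rcases min_lt_iff.mp h with h' | h' <;>
    simp [a2, choose_cast_zero h', choose_cast_zero (Nat.lt_succ_of_lt h')]

lemma a3_vanish (p q j : ℕ) (h : min p q < j) : a3 p q j = 0 := by
  rcases min_lt_iff.mp h with h' | h' <;>
    simp [a3, choose_cast_zero h', choose_cast_zero (Nat.lt_succ_of_lt h')]

lemma a4_vanish (p q j : ℕ) (h : min p q < j) : a4 p q j = 0 := by
  rcases min_lt_iff.mp h with h' | h' <;>
    simp [a4, choose_cast_zero h', choose_cast_zero (Nat.succ_lt_succ h')]

lemma stable_aux {N N' : ℕ} (h' : N ≤ N') (f : ℕ → ℂ) (hf : ∀ j, N ≤ j → f j = 0) :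
    ∑ j ∈ Finset.range N', f j = ∑ j ∈ Finset.range N, f j := by
  refine (Finset.sum_subset (Finset.range_subset_range.mpr h') fun j _ hj => ?_).symm
  exact hf j (le_of_not_gt fun hc => hj (Finset.mem_range.mpr hc))

lemma A1_stable (p q : ℕ) {N N' : ℕ} (h : min p q < N) (h' : N ≤ N') :
    A1 p q N' = A1 p q N :=
  stable_aux h' _ fun j hj => a1_vanish p q j (lt_of_lt_of_le h hj)
lemma A2_stable (p q : ℕ) {N N' : ℕ} (h : min p q < N) (h' : N ≤ N') :
    A2 p q N' = A2 p q N :=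
  stable_aux h' _ fun j hj => a2_vanish p q j (lt_of_lt_of_le h hj)
lemma A3_stable (p q : ℕ) {N N' : ℕ} (h : min p q < N) (h' : N ≤ N') :
    A3 p q N' = A3 p q N :=
  stable_aux h' _ fun j hj => a3_vanish p q j (lt_of_lt_of_le h hj)
lemma A4_stable (p q : ℕ) {N N' : ℕ} (h : min p q < N) (h' : N ≤ N') :
    A4 p q N' = A4 p q N :=
  stable_aux h' _ fun j hj => a4_vanish p q j (lt_of_lt_of_le h hj)

lemma tele (u v : ℕ → ℂ) (N : ℕ) (h0 : u 0 = 0) (hs : ∀ j, u (j+1) = v j)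
    (hN : v N = 0) :
    ∑ j ∈ Finset.range (N+1), (-1:ℂ)^j * (u j + v j) = 0 := by
  have h1 : ∑ j ∈ Finset.range (N+1), (-1:ℂ)^j * u j
      = - ∑ j ∈ Finset.range N, (-1:ℂ)^j * v j := by
    rw [Finset.sum_range_succ' (fun j => (-1:ℂ)^j * u j) N]
    simp only [h0, hs, mul_zero, add_zero, pow_succ, pow_zero]
    rw [← Finset.sum_neg_distrib]
    exact Finset.sum_congr rfl fun j _ => by ring
  have h2 : ∑ j ∈ Finset.range (N+1), (-1:ℂ)^j * v j
      = ∑ j ∈ Finset.range N, (-1:ℂ)^j * v j := by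
    rw [Finset.sum_range_succ, hN, mul_zero, add_zero]
  calc ∑ j ∈ Finset.range (N+1), (-1:ℂ)^j * (u j + v j)
      = (∑ j ∈ Finset.range (N+1), (-1:ℂ)^j * u j)
        + ∑ j ∈ Finset.range (N+1), (-1:ℂ)^j * v j := by
        rw [← Finset.sum_add_distrib]; exact Finset.sum_congr rfl fun j _ => by ring
    _ = 0 := by rw [h1, h2]; ring

-- Pascal casts
lemma pascalC (n k : ℕ) : (((n+1).choose (k+1) : ℕ) : ℂ) = n.choose k + n.choose (k+1) := by
  rw [Nat.choose_succ_succ]; push_cast; ring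

lemma R1 (p q M : ℕ) (hM : p < M) :
    A1 (p+1) (q+1) (M+1) = A1 p (q+1) (M+1) + A3 p (q+1) (M+1) := by
  set u : ℕ → ℂ := fun j => (((p+1).choose j : ℂ) - p.choose j) * (q+1).choose j with hu
  set v : ℕ → ℂ := fun j => (p.choose j : ℂ) * (q+1).choose (j+1) with hv
  have ht := tele u v M (by simp [hu]) (fun j => by
      simp only [hu, hv, pascalC p j]; ring)
    (by simp [hv, choose_cast_zero hM])
  rw [A1, A1, A3, ← Finset.sum_add_distrib, ← sub_eq_zero, ← Finset.sum_sub_distrib]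
  have key : ∀ j, a1 (p+1) (q+1) j - (a1 p (q+1) j + a3 p (q+1) j)
      = (-1:ℂ)^(q+1) * ((-1)^j * (u j + v j)) := by
    intro j
    simp only [a1, a3, hu, hv, pascalC (p+1) j, pascalC p j]
    ring
  rw [Finset.sum_congr rfl fun j _ => key j, ← Finset.mul_sum, ht, mul_zero]

lemma R2 (p q M : ℕ) (hM : p < M) :
    A2 (p+1) (q+1) (M+1) = A2 p (q+1) (M+1) + A4 p (q+1) (M+1) := by
  set u : ℕ → ℂ := fun j => (((p+1).choose j : ℂ) - p.choose j) * (q+1).choose j with hu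
  set v : ℕ → ℂ := fun j => (p.choose j : ℂ) * (q+1).choose (j+1) with hv
  have ht := tele u v M (by simp [hu]) (fun j => by
      simp only [hu, hv, pascalC p j]; ring)
    (by simp [hv, choose_cast_zero hM])
  rw [A2, A2, A4, ← Finset.sum_add_distrib, ← sub_eq_zero, ← Finset.sum_sub_distrib]
  have key : ∀ j, a2 (p+1) (q+1) j - (a2 p (q+1) j + a4 p (q+1) j)
      = (-(-1:ℂ)^(q+1)) * ((-1)^j * (u j + v j)) := by
    intro j
    simp only [a2, a4, hu, hv, pascalC p j, pascalC (q+1) j]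
    ring
  rw [Finset.sum_congr rfl fun j _ => key j, ← Finset.mul_sum, ht, mul_zero]

lemma R3 (p q M : ℕ) (hM : p < M) :
    A3 (p+1) (q+1) (M+1) = A1 (p+1) q (M+1) - A3 (p+1) q (M+1) := by
  set u : ℕ → ℂ := fun j => (((q+1).choose j : ℂ) - q.choose j) * (p+1).choose j with hu
  set v : ℕ → ℂ := fun j => ((p+1).choose (j+1) : ℂ) * q.choose j with hv
  have ht := tele u v M (by simp [hu]) (fun j => by
      simp only [hu, hv, pascalC q j]; ring)
    (by simp [hv, choose_cast_zero (Nat.succ_lt_succ hM)])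
  rw [A3, A1, A3, ← Finset.sum_sub_distrib, ← sub_eq_zero, ← Finset.sum_sub_distrib]
  have key : ∀ j, a3 (p+1) (q+1) j - (a1 (p+1) q j - a3 (p+1) q j)
      = (-(-1:ℂ)^q) * ((-1)^j * (u j + v j)) := by
    intro j
    simp only [a1, a3, hu, hv, pascalC (p+1) j, pascalC q j]
    ring
  rw [Finset.sum_congr rfl fun j _ => key j, ← Finset.mul_sum, ht, mul_zero]

lemma R4 (p q M : ℕ) (hM : p < M) :
    A4 (p+1) (q+1) (M+1) = A2 (p+1) q (M+1) - A4 (p+1) q (M+1) := by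
  set u : ℕ → ℂ := fun j => (((q+1).choose j : ℂ) - q.choose j) * (p+1).choose j with hu
  set v : ℕ → ℂ := fun j => ((p+1).choose (j+1) : ℂ) * q.choose j with hv
  have ht := tele u v M (by simp [hu]) (fun j => by
      simp only [hu, hv, pascalC q j]; ring)
    (by simp [hv, choose_cast_zero (Nat.succ_lt_succ hM)])
  rw [A4, A2, A4, ← Finset.sum_sub_distrib, ← sub_eq_zero, ← Finset.sum_sub_distrib]
  have key : ∀ j, a4 (p+1) (q+1) j - (a2 (p+1) q j - a4 (p+1) q j)
      = (-(-1:ℂ)^q) * ((-1)^j * (u j + v j)) := by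
    intro j
    simp only [a2, a4, hu, hv, pascalC (p+1) j, pascalC q j, pascalC (q+1) j]
    ring
  rw [Finset.sum_congr rfl fun j _ => key j, ← Finset.mul_sum, ht, mul_zero]



lemma sqrt2_mul_self : ((Real.sqrt 2 : ℝ) : ℂ) * ((Real.sqrt 2 : ℝ) : ℂ) = 2 := by
  rw [show ((Real.sqrt 2:ℝ):ℂ) * ((Real.sqrt 2:ℝ):ℂ)
      = ((Real.sqrt 2 * Real.sqrt 2 : ℝ) : ℂ) by push_cast; ring,
    Real.mul_self_sqrt (by norm_num)]
  norm_num

lemma inv_sqrt2_sq : ((Real.sqrt 2 : ℝ) : ℂ)⁻¹ * ((Real.sqrt 2 : ℝ) : ℂ)⁻¹ = 1/2 := by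
  rw [← mul_inv, sqrt2_mul_self]; norm_num

lemma matP_sq : matP * matP = ((Real.sqrt 2 : ℝ) : ℂ)⁻¹ • matP := by
  ext i j
  fin_cases i <;> fin_cases j <;>
    simp [matP, Matrix.mul_apply, Fin.sum_univ_two] <;> ring

lemma matQ_sq : matQ * matQ = (-((Real.sqrt 2 : ℝ) : ℂ)⁻¹) • matQ := by
  ext i j
  fin_cases i <;> fin_cases j <;>
    simp [matQ, Matrix.mul_apply, Fin.sum_univ_two] <;> ring

lemma matP_pow (k : ℕ) : matP ^ (k+1) = (((Real.sqrt 2 : ℝ) : ℂ)⁻¹)^k • matP := by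
  induction k with
  | zero => simp
  | succ k ih =>
    rw [pow_succ, ih, Matrix.smul_mul, matP_sq, smul_smul, pow_succ]

lemma matQ_pow (k : ℕ) :
    matQ ^ (k+1) = ((-1:ℂ)^k * (((Real.sqrt 2 : ℝ) : ℂ)⁻¹)^k) • matQ := by
  induction k with
  | zero => simp
  | succ k ih =>
    rw [pow_succ, ih, Matrix.smul_mul, matQ_sq, smul_smul, pow_succ, pow_succ]
    congr 1
    ring

-- boundary evaluations
lemma A1_left (q N : ℕ) : A1 0 q (N+1) = (-1:ℂ)^q := by
  rw [A1_stable 0 q (by simp) (by omega : 1 ≤ N+1), A1, Finset.sum_range_one]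
  simp [a1]
lemma A2_left (q N : ℕ) : A2 0 q (N+1) = -(-1:ℂ)^q := by
  rw [A2_stable 0 q (by simp) (by omega : 1 ≤ N+1), A2, Finset.sum_range_one]
  simp [a2]
lemma A3_left (q N : ℕ) : A3 0 q (N+1) = (-1:ℂ)^q * (1 - (q:ℂ)) := by
  rw [A3_stable 0 q (by simp) (by omega : 1 ≤ N+1), A3, Finset.sum_range_one]
  simp [a3, Nat.choose_one_right]
lemma A4_left (q N : ℕ) : A4 0 q (N+1) = (-1:ℂ)^q * ((q:ℂ) + 1) := by
  rw [A4_stable 0 q (by simp) (by omega : 1 ≤ N+1), A4, Finset.sum_range_one]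
  simp [a4, Nat.choose_one_right]

lemma A1_right (p N : ℕ) : A1 p 0 (N+1) = (p:ℂ) + 1 := by
  rw [A1_stable p 0 (by simp) (by omega : 1 ≤ N+1), A1, Finset.sum_range_one]
  simp [a1, Nat.choose_one_right]
lemma A2_right (p N : ℕ) : A2 p 0 (N+1) = (p:ℂ) - 1 := by
  rw [A2_stable p 0 (by simp) (by omega : 1 ≤ N+1), A2, Finset.sum_range_one]
  simp [a2, Nat.choose_one_right]
lemma A3_right (p N : ℕ) : A3 p 0 (N+1) = 1 := by
  rw [A3_stable p 0 (by simp) (by omega : 1 ≤ N+1), A3, Finset.sum_range_one]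
  simp [a3]
lemma A4_right (p N : ℕ) : A4 p 0 (N+1) = 1 := by
  rw [A4_stable p 0 (by simp) (by omega : 1 ≤ N+1), A4, Finset.sum_range_one]
  simp [a4]

lemma combine (c : ℂ) (b1 b2 b3 b4 c1 c2 c3 c4 : ℂ) :
    matP * (c • !![b1,b2;b3,b4]) + matQ * (c • !![c1,c2;c3,c4])
      = (((Real.sqrt 2 : ℝ) : ℂ)⁻¹ * c) • !![b1+b3, b2+b4; c1-c3, c2-c4] := by
  ext i j
  fin_cases i <;> fin_cases j <;>
    (simp [matP, matQ, Matrix.mul_apply, Fin.sum_univ_two]; ring)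

lemma W_closed (p q : ℕ) :
    W (p+q+2) (p+1) = (((Real.sqrt 2 : ℝ) : ℂ)⁻¹)^(p+q+2) •
      !![A1 p q (p+q+2), A2 p q (p+q+2); A3 p q (p+q+2), A4 p q (p+q+2)] := by
  suffices H : ∀ n p q : ℕ, p + q = n →
      W (p+q+2) (p+1) = (((Real.sqrt 2 : ℝ) : ℂ)⁻¹)^(p+q+2) •
        !![A1 p q (p+q+2), A2 p q (p+q+2); A3 p q (p+q+2), A4 p q (p+q+2)] from
    H (p+q) p q rfl
  intro n
  induction n with
  | zero =>
    intro p q h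
    obtain ⟨rfl, rfl⟩ : p = 0 ∧ q = 0 := by omega
    have h1 : W 2 1 = matP * W 1 0 + matQ * W 1 1 := W_succ 1 0
    have e1 : A1 0 0 2 = 1 := by simpa using A1_left 0 1
    have e2 : A2 0 0 2 = -1 := by simpa using A2_left 0 1
    have e3 : A3 0 0 2 = 1 := by simpa using A3_left 0 1
    have e4 : A4 0 0 2 = 1 := by simpa using A4_left 0 1
    show W 2 1 = _
    rw [h1, W_zero, W_self, e1, e2, e3, e4, pow_one, pow_one]
    ext i j
    fin_cases i <;> fin_cases j <;>
      simp [matP, matQ, Matrix.mul_apply, Fin.sum_univ_two] <;> ring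
  | succ n ih =>
    intro p q h
    match p, q with
    | 0, 0 => omega
    | 0, q+1 =>
      have h1 : W (q+3) 1 = matP * W (q+2) 0 + matQ * W (q+2) 1 := W_succ (q+2) 0
      have hA := ih 0 q (by omega)
      rw [show 0+q+2 = q+2 from by omega] at hA
      rw [show 0+(q+1)+2 = q+3 from by omega, show (0:ℕ)+1 = 1 from rfl]
      rw [h1, W_zero, hA, matQ_pow (q+1)]
      have e1 : A1 0 q (q+2) = (-1:ℂ)^q := A1_left q (q+1)
      have e2 : A2 0 q (q+2) = -(-1:ℂ)^q := A2_left q (q+1)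
      have e3 : A3 0 q (q+2) = (-1:ℂ)^q * (1 - (q:ℂ)) := A3_left q (q+1)
      have e4 : A4 0 q (q+2) = (-1:ℂ)^q * ((q:ℂ) + 1) := A4_left q (q+1)
      have f1 : A1 0 (q+1) (q+3) = (-1:ℂ)^(q+1) := A1_left (q+1) (q+2)
      have f2 : A2 0 (q+1) (q+3) = -(-1:ℂ)^(q+1) := A2_left (q+1) (q+2)
      have f3 : A3 0 (q+1) (q+3) = (-1:ℂ)^(q+1) * (1 - ((q+1:ℕ):ℂ)) := A3_left (q+1) (q+2)
      have f4 : A4 0 (q+1) (q+3) = (-1:ℂ)^(q+1) * (((q+1:ℕ):ℂ) + 1) := A4_left (q+1) (q+2)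
      rw [e1, e2, e3, e4, f1, f2, f3, f4]
      ext i j
      fin_cases i <;> fin_cases j <;>
        (simp [matP, matQ, Matrix.mul_apply, Fin.sum_univ_two]; push_cast; ring)
    | p+1, 0 =>
      have h1 : W (p+3) (p+2) = matP * W (p+2) (p+1) + matQ * W (p+2) (p+2) :=
        W_succ (p+2) (p+1)
      have hA := ih p 0 (by omega)
      rw [show p+0+2 = p+2 from by omega] at hA
      rw [show p+1+0+2 = p+3 from by omega, show p+1+1 = p+2 from by omega]
      rw [h1, W_self, hA, matP_pow (p+1)]
      have e1 : A1 p 0 (p+2) = (p:ℂ) + 1 := A1_right p (p+1)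
      have e2 : A2 p 0 (p+2) = (p:ℂ) - 1 := A2_right p (p+1)
      have e3 : A3 p 0 (p+2) = 1 := A3_right p (p+1)
      have e4 : A4 p 0 (p+2) = 1 := A4_right p (p+1)
      have f1 : A1 (p+1) 0 (p+3) = ((p+1:ℕ):ℂ) + 1 := A1_right (p+1) (p+2)
      have f2 : A2 (p+1) 0 (p+3) = ((p+1:ℕ):ℂ) - 1 := A2_right (p+1) (p+2)
      have f3 : A3 (p+1) 0 (p+3) = 1 := A3_right (p+1) (p+2)
      have f4 : A4 (p+1) 0 (p+3) = 1 := A4_right (p+1) (p+2)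
      rw [e1, e2, e3, e4, f1, f2, f3, f4]
      ext i j
      fin_cases i <;> fin_cases j <;>
        (simp [matP, matQ, Matrix.mul_apply, Fin.sum_univ_two]; push_cast; ring)
    | p+1, q+1 =>
      have h1 : W (p+q+4) (p+2) = matP * W (p+q+3) (p+1) + matQ * W (p+q+3) (p+2) :=
        W_succ (p+q+3) (p+1)
      have hA := ih p (q+1) (by omega)
      rw [show p+(q+1)+2 = p+q+3 from by omega] at hA
      have hB := ih (p+1) q (by omega : (p+1) + q = n)
      rw [show (p+1)+q+2 = p+q+3 from by omega, show p+1+1 = p+2 from by omega] at hB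
      rw [show p+1+(q+1)+2 = p+q+4 from by omega, show p+1+1 = p+2 from by omega]
      rw [h1, hA, hB, combine]
      rw [show p+q+4 = (p+q+3)+1 from rfl]
      rw [R1 p q (p+q+3) (by omega), R2 p q (p+q+3) (by omega),
        R3 p q (p+q+3) (by omega), R4 p q (p+q+3) (by omega)]
      rw [A1_stable p (q+1) (by omega : min p (q+1) < p+q+3) (by omega : p+q+3 ≤ (p+q+3)+1),
        A3_stable p (q+1) (by omega : min p (q+1) < p+q+3) (by omega : p+q+3 ≤ (p+q+3)+1),
        A2_stable p (q+1) (by omega : min p (q+1) < p+q+3) (by omega : p+q+3 ≤ (p+q+3)+1),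
        A4_stable p (q+1) (by omega : min p (q+1) < p+q+3) (by omega : p+q+3 ≤ (p+q+3)+1),
        A1_stable (p+1) q (by omega : min (p+1) q < p+q+3) (by omega : p+q+3 ≤ (p+q+3)+1),
        A2_stable (p+1) q (by omega : min (p+1) q < p+q+3) (by omega : p+q+3 ≤ (p+q+3)+1),
        A3_stable (p+1) q (by omega : min (p+1) q < p+q+3) (by omega : p+q+3 ≤ (p+q+3)+1),
        A4_stable (p+1) q (by omega : min (p+1) q < p+q+3) (by omega : p+q+3 ≤ (p+q+3)+1)]
      rw [pow_succ]
      congr 1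
      ring

-- final per-term machinery
def uu (p q j : ℕ) : ℂ := (-1)^(j+q) * (p.choose j) * (q.choose j) / ((j:ℂ)+1)

lemma jcast_ne (j : ℕ) : ((j:ℂ)+1) ≠ 0 := Nat.cast_add_one_ne_zero j

lemma e1 (p q j : ℕ) : a1 p q j = ((p:ℂ)+1) * uu p q j := by
  have h : ((p:ℂ)+1) * (p.choose j) = ((p+1).choose (j+1) : ℕ) * ((j:ℂ)+1) := by
    exact_mod_cast Nat.add_one_mul_choose_eq p j
  rw [a1, uu, ← mul_div_assoc, eq_div_iff (jcast_ne j)]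
  linear_combination (-(-1:ℂ)^(j+q) * (q.choose j)) * h

lemma e4 (p q j : ℕ) : a4 p q j = ((q:ℂ)+1) * uu p q j := by
  have h : ((q:ℂ)+1) * (q.choose j) = ((q+1).choose (j+1) : ℕ) * ((j:ℂ)+1) := by
    exact_mod_cast Nat.add_one_mul_choose_eq q j
  rw [a4, uu, ← mul_div_assoc, eq_div_iff (jcast_ne j)]
  linear_combination (-(-1:ℂ)^(j+q) * (p.choose j)) * h

lemma e2 (p q j : ℕ) (hjp : j ≤ p) :
    a2 p q j = (((p:ℂ)+1) - 2*((j:ℂ)+1)) * uu p q j := by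
  have h0 : ((p.choose (j+1) * (j+1) : ℕ) : ℂ) = ((p.choose j * (p - j) : ℕ) : ℂ) := by
    exact_mod_cast congrArg (Nat.cast : ℕ → ℂ) (Nat.choose_succ_right_eq p j)
  rw [Nat.cast_mul, Nat.cast_mul, Nat.cast_sub hjp] at h0
  push_cast at h0
  rw [a2, uu, ← mul_div_assoc, eq_div_iff (jcast_ne j)]
  linear_combination ((-1:ℂ)^(j+q) * (q.choose j)) * h0

lemma e3 (p q j : ℕ) (hjq : j ≤ q) :
    a3 p q j = (2*((j:ℂ)+1) - ((q:ℂ)+1)) * uu p q j := by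
  have h0 : ((q.choose (j+1) * (j+1) : ℕ) : ℂ) = ((q.choose j * (q - j) : ℕ) : ℂ) := by
    exact_mod_cast congrArg (Nat.cast : ℕ → ℂ) (Nat.choose_succ_right_eq q j)
  rw [Nat.cast_mul, Nat.cast_mul, Nat.cast_sub hjq] at h0
  push_cast at h0
  rw [a3, uu, ← mul_div_assoc, eq_div_iff (jcast_ne j)]
  linear_combination (-(-1:ℂ)^(j+q) * (p.choose j)) * h0

lemma uu_mul (p q j k : ℕ) :
    uu p q j * uu p q k
      = (-1:ℂ)^(j+k) * (p.choose j) * (p.choose k) * (q.choose j) * (q.choose k)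
        / (((j:ℂ)+1) * ((k:ℂ)+1)) := by
  have hsign : (-1:ℂ)^(j+q) * (-1)^(k+q) = (-1)^(j+k) := by
    rw [← pow_add, show j+q+(k+q) = (j+k) + 2*q from by ring, pow_add, pow_mul]
    norm_num
  rw [uu, uu, div_mul_div_comm]
  congr 1
  linear_combination ((p.choose j : ℂ) * (p.choose k) * (q.choose j) * (q.choose k)) * hsign

lemma T00 (p q j k : ℕ) (hjq : j ≤ q) (hkq : k ≤ q) :
    a1 p q j * a1 p q k + a3 p q j * a3 p q k
      = uu p q j * uu p q k *
        (((p:ℂ)+1)^2 + (((q:ℂ)+1) - 2*((j:ℂ)+1)) * (((q:ℂ)+1) - 2*((k:ℂ)+1))) := by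
  rw [e1, e1, e3 p q j hjq, e3 p q k hkq]; ring

lemma T01 (p q j k : ℕ) (hjq : j ≤ q) (hkp : k ≤ p) :
    a1 p q j * a2 p q k + a3 p q j * a4 p q k
      = uu p q j * uu p q k *
        (((p:ℂ)+1) * (((p:ℂ)+1) - 2*((k:ℂ)+1))
          - ((q:ℂ)+1) * (((q:ℂ)+1) - 2*((j:ℂ)+1))) := by
  rw [e1, e2 p q k hkp, e3 p q j hjq, e4]; ring

lemma T10 (p q j k : ℕ) (hjp : j ≤ p) (hkq : k ≤ q) :
    a2 p q j * a1 p q k + a4 p q j * a3 p q k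
      = uu p q j * uu p q k *
        (((p:ℂ)+1) * (((p:ℂ)+1) - 2*((j:ℂ)+1))
          - ((q:ℂ)+1) * (((q:ℂ)+1) - 2*((k:ℂ)+1))) := by
  rw [e1, e2 p q j hjp, e3 p q k hkq, e4]; ring

lemma T11 (p q j k : ℕ) (hjp : j ≤ p) (hkp : k ≤ p) :
    a2 p q j * a2 p q k + a4 p q j * a4 p q k
      = uu p q j * uu p q k *
        (((q:ℂ)+1)^2 + (((p:ℂ)+1) - 2*((j:ℂ)+1)) * (((p:ℂ)+1) - 2*((k:ℂ)+1))) := by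
  rw [e2 p q j hjp, e2 p q k hkp, e4, e4]; ring

lemma trans_mul (a b c d : ℂ) :
    (!![a,b;c,d])ᵀ * !![a,b;c,d]
      = !![a*a+c*c, a*b+c*d; b*a+d*c, b*b+d*d] := by
  have ht : (!![a,b;c,d])ᵀ = !![a,c;b,d] := by
    ext i j
    fin_cases i <;> fin_cases j <;> rfl
  rw [ht, Matrix.mul_fin_two]

theorem xi_transpose_mul_xi (l m : ℕ) (hl : 1 ≤ l) (hm : 1 ≤ m) :
    (Xi l m)ᵀ * Xi l m
      = ((1 : ℂ) / 2) ^ (l + m) •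
        ∑ γ ∈ Finset.Icc 1 (min l m), ∑ δ ∈ Finset.Icc 1 (min l m),
          ((-1 : ℂ) ^ (γ + δ) / ((γ : ℂ) * (δ : ℂ)) *
            ((l - 1).choose (γ - 1)) * ((l - 1).choose (δ - 1)) *
            ((m - 1).choose (γ - 1)) * ((m - 1).choose (δ - 1))) •
          !![(l : ℂ) ^ 2 + ((m : ℂ) - 2 * γ) * ((m : ℂ) - 2 * δ),
              (l : ℂ) * ((l : ℂ) - 2 * γ) - (m : ℂ) * ((m : ℂ) - 2 * δ);
             (l : ℂ) * ((l : ℂ) - 2 * δ) - (m : ℂ) * ((m : ℂ) - 2 * γ),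
              (m : ℂ) ^ 2 + ((l : ℂ) - 2 * γ) * ((l : ℂ) - 2 * δ)] := by
  obtain ⟨p, rfl⟩ : ∃ p, l = p + 1 := ⟨l - 1, by omega⟩
  obtain ⟨q, rfl⟩ : ∃ q, m = q + 1 := ⟨m - 1, by omega⟩
  have hXi : Xi (p+1) (q+1) = W ((p+1)+(q+1)) (p+1) := rfl
  rw [hXi, show (p+1)+(q+1) = p+q+2 from by omega]
  rw [W_closed p q]
  set K := min p q + 1 with hK
  rw [A1_stable p q (show min p q < K by omega) (show K ≤ p+q+2 by omega),
      A2_stable p q (show min p q < K by omega) (show K ≤ p+q+2 by omega),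
      A3_stable p q (show min p q < K by omega) (show K ≤ p+q+2 by omega),
      A4_stable p q (show min p q < K by omega) (show K ≤ p+q+2 by omega)]
  rw [Matrix.transpose_smul, Matrix.smul_mul, Matrix.mul_smul, smul_smul, ← mul_pow,
    inv_sqrt2_sq, trans_mul]
  rw [show min (p+1) (q+1) = K from by omega]
  simp only [← Finset.Ico_add_one_right_eq_Icc, Finset.sum_Ico_eq_sum_range, Nat.succ_sub_one,
    Nat.add_sub_cancel, Nat.add_sub_cancel_left]
  congr 1
  ext i j
  fin_cases i <;> fin_cases j
  · -- (0,0)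
    simp only [Matrix.sum_apply, Matrix.smul_apply, smul_eq_mul, Fin.zero_eta, Fin.mk_one,
      Matrix.cons_val', Matrix.cons_val_zero, Matrix.cons_val_one, Matrix.head_cons,
      Matrix.empty_val', Matrix.cons_val_fin_one, Matrix.of_apply, Matrix.head_fin_const]
    rw [A1, A3, Finset.sum_mul_sum, Finset.sum_mul_sum, ← Finset.sum_add_distrib]
    refine Finset.sum_congr rfl fun j hj => ?_
    rw [← Finset.sum_add_distrib]
    refine Finset.sum_congr rfl fun k hk => ?_
    have hj' := Finset.mem_range.mp hj
    have hk' := Finset.mem_range.mp hk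
    rw [T00 p q j k (by omega) (by omega), uu_mul]
    push_cast
    ring
  · -- (0,1)
    simp only [Matrix.sum_apply, Matrix.smul_apply, smul_eq_mul, Fin.zero_eta, Fin.mk_one,
      Matrix.cons_val', Matrix.cons_val_zero, Matrix.cons_val_one, Matrix.head_cons,
      Matrix.empty_val', Matrix.cons_val_fin_one, Matrix.of_apply, Matrix.head_fin_const]
    rw [A1, A2, A3, A4, Finset.sum_mul_sum, Finset.sum_mul_sum, ← Finset.sum_add_distrib]
    conv_rhs => rw [Finset.sum_comm]
    refine Finset.sum_congr rfl fun j hj => ?_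
    rw [← Finset.sum_add_distrib]
    refine Finset.sum_congr rfl fun k hk => ?_
    have hj' := Finset.mem_range.mp hj
    have hk' := Finset.mem_range.mp hk
    rw [T01 p q j k (by omega) (by omega), uu_mul]
    push_cast
    ring
  · -- (1,0)
    simp only [Matrix.sum_apply, Matrix.smul_apply, smul_eq_mul, Fin.zero_eta, Fin.mk_one,
      Matrix.cons_val', Matrix.cons_val_zero, Matrix.cons_val_one, Matrix.head_cons,
      Matrix.empty_val', Matrix.cons_val_fin_one, Matrix.of_apply, Matrix.head_fin_const]
    rw [A1, A2, A3, A4, Finset.sum_mul_sum, Finset.sum_mul_sum, ← Finset.sum_add_distrib]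
    conv_rhs => rw [Finset.sum_comm]
    refine Finset.sum_congr rfl fun j hj => ?_
    rw [← Finset.sum_add_distrib]
    refine Finset.sum_congr rfl fun k hk => ?_
    have hj' := Finset.mem_range.mp hj
    have hk' := Finset.mem_range.mp hk
    rw [T10 p q j k (by omega) (by omega), uu_mul]
    push_cast
    ring
  · -- (1,1)
    simp only [Matrix.sum_apply, Matrix.smul_apply, smul_eq_mul, Fin.zero_eta, Fin.mk_one,
      Matrix.cons_val', Matrix.cons_val_zero, Matrix.cons_val_one, Matrix.head_cons,
      Matrix.empty_val', Matrix.cons_val_fin_one, Matrix.of_apply, Matrix.head_fin_const]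
    rw [A2, A4, Finset.sum_mul_sum, Finset.sum_mul_sum, ← Finset.sum_add_distrib]
    refine Finset.sum_congr rfl fun j hj => ?_
    rw [← Finset.sum_add_distrib]
    refine Finset.sum_congr rfl fun k hk => ?_
    have hj' := Finset.mem_range.mp hj
    have hk' := Finset.mem_range.mp hk
    rw [T11 p q j k (by omega) (by omega), uu_mul]
    push_cast
    ring
end
end

section
/- For every integer n ≥ 1, ∫_{-1/√2}^{1/√2} x^{2n} / ( π·(1 − x²)·√(1 − 2x²) ) dx = 1 − (1/√2)·Σ_{k=0}^{n-1} 2^{-3k} · C(2k, k), where C(2k,k) denotes the central binomial coefficient. (This is the 2n-th moment of the weak limit distribution of the rescaled symmetric Hadamard walk, whose density on (−1/√2, 1/√2) is 1/(π(1−x²)√(1−2x²)).) -/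
open Real intervalIntegral MeasureTheory Set Filter

lemma prod_half (m : ℕ) : (∏ i ∈ Finset.range m, (2 * (i:ℝ) + 1) / (2 * i + 2)) = ((2*m).choose m : ℝ) / 4 ^ m := by
  induction m with
  | zero => simp
  | succ k ih =>
    rw [Finset.prod_range_succ, ih]
    have h := Nat.succ_mul_centralBinom_succ k
    simp only [Nat.centralBinom_eq_two_mul_choose] at h
    have h2 : ((k:ℝ)+1) * ((2*(k+1)).choose (k+1) : ℝ) = 2 * (2*(k:ℝ)+1) * ((2*k).choose k : ℝ) := by
      exact_mod_cast congrArg (Nat.cast : ℕ → ℝ) h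
    have h4 : (4:ℝ)^k ≠ 0 := by positivity
    have hk : ((k:ℝ)+1) ≠ 0 := by positivity
    push_cast
    push_cast at h2
    rw [pow_succ]
    field_simp
    linear_combination (-2) * h2

lemma sin_pow_symm (m : ℕ) : (∫ θ in (-(π/2))..(π/2), sin θ ^ (2*m)) = π * ((2*m).choose m : ℝ) / 4 ^ m := by
  have e1 : (∫ θ in (-(π/2))..(0:ℝ), sin θ ^ (2*m)) = ∫ θ in (0:ℝ)..(π/2), sin θ ^ (2*m) := by
    have := intervalIntegral.integral_comp_neg (a := (0:ℝ)) (b := π/2) (fun θ => sin θ ^ (2*m))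
    simp only [Real.sin_neg, neg_zero] at this
    rw [← this]
    congr 1; ext θ; rw [Even.neg_pow (even_two_mul m)]
  have e2 : (∫ θ in (π/2)..π, sin θ ^ (2*m)) = ∫ θ in (0:ℝ)..(π/2), sin θ ^ (2*m) := by
    have := intervalIntegral.integral_comp_sub_left (a := (0:ℝ)) (b := π/2) (fun θ => sin θ ^ (2*m)) π
    simp only [Real.sin_pi_sub, sub_zero, sub_self] at this
    rw [show π - π/2 = π/2 by ring] at this
    exact this.symm
  have hi : ∀ a b : ℝ, IntervalIntegrable (fun θ => sin θ ^ (2*m)) volume a b :=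
    fun a b => (Real.continuous_sin.pow _).intervalIntegrable a b
  have s1 : (∫ θ in (-(π/2))..(π/2), sin θ ^ (2*m))
      = (∫ θ in (-(π/2))..(0:ℝ), sin θ ^ (2*m)) + ∫ θ in (0:ℝ)..(π/2), sin θ ^ (2*m) :=
    (intervalIntegral.integral_add_adjacent_intervals (hi _ _) (hi _ _)).symm
  have s2 : (∫ θ in (0:ℝ)..π, sin θ ^ (2*m))
      = (∫ θ in (0:ℝ)..(π/2), sin θ ^ (2*m)) + ∫ θ in (π/2)..π, sin θ ^ (2*m) :=
    (intervalIntegral.integral_add_adjacent_intervals (hi _ _) (hi _ _)).symm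
  have : (∫ θ in (-(π/2))..(π/2), sin θ ^ (2*m)) = ∫ θ in (0:ℝ)..π, sin θ ^ (2*m) := by
    rw [s1, s2, e1, e2]
  rw [this, integral_sin_pow_even, prod_half, mul_div_assoc]

lemma cont_f (n : ℕ) : Continuous (fun θ : ℝ => sin θ ^ (2*n) / (1 + cos θ ^ 2)) := by
  apply Continuous.div ((Real.continuous_sin.pow _)) (by continuity)
  intro x; nlinarith [sq_nonneg (Real.cos x)]

lemma S0 : (∫ θ in (-(π/2))..(π/2), 1 / (1 + cos θ ^ 2)) = π / Real.sqrt 2 := by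
  have h2 : (Real.sqrt 2) > 0 := by positivity
  have hs2 : Real.sqrt 2 ^ 2 = 2 := Real.sq_sqrt (by norm_num)
  have key := intervalIntegral.integral_eq_sub_of_hasDerivAt_of_tendsto
    (f := fun θ => (Real.sqrt 2)⁻¹ * arctan (tan θ / Real.sqrt 2))
    (f' := fun θ => 1 / (1 + cos θ ^ 2))
    (a := -(π/2)) (b := π/2) (by linarith [pi_pos])
    (fa := (Real.sqrt 2)⁻¹ * (-(π/2))) (fb := (Real.sqrt 2)⁻¹ * (π/2))
    ?_ ?_ ?_ ?_
  · rw [key]; rw [div_eq_mul_inv π, mul_comm]; ring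
  · intro x hx
    have hcos : Real.cos x > 0 := Real.cos_pos_of_mem_Ioo hx
    have ht := Real.hasDerivAt_tan hcos.ne'
    have ha := Real.hasDerivAt_arctan (tan x / Real.sqrt 2)
    have := ((ha.comp x (ht.div_const (Real.sqrt 2))).const_mul ((Real.sqrt 2)⁻¹))
    refine this.congr_deriv (Eq.symm ?_)
    have htan : Real.tan x = sin x / cos x := Real.tan_eq_sin_div_cos x
    rw [htan]
    have h1 : Real.sin x ^ 2 = 1 - cos x ^ 2 := by nlinarith [Real.sin_sq_add_cos_sq x]
    field_simp
    ring_nf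
    linear_combination h1 + (Real.cos x ^ 2) * hs2
  · have : Continuous (fun θ : ℝ => 1 / (1 + cos θ ^ 2)) := by
      apply Continuous.div continuous_const (by continuity)
      intro x; nlinarith [sq_nonneg (Real.cos x)]
    exact this.intervalIntegrable _ _
  · have htan : Tendsto (fun θ => Real.tan θ / Real.sqrt 2) (nhdsWithin (-(π/2)) (Set.Ioi (-(π/2)))) atBot := by
      exact (Real.tendsto_tan_neg_pi_div_two).atBot_mul_const' (by positivity)
    have := (Real.tendsto_arctan_atBot.mono_right nhdsWithin_le_nhds).comp htan
    exact (this.const_mul _)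
  · have htan : Tendsto (fun θ => Real.tan θ / Real.sqrt 2) (nhdsWithin (π/2) (Set.Iio (π/2))) atTop := by
      exact (Real.tendsto_tan_pi_div_two).atTop_div_const (by positivity)
    have := (Real.tendsto_arctan_atTop.mono_right nhdsWithin_le_nhds).comp htan
    exact (this.const_mul _)

lemma Sval (n : ℕ) : (∫ θ in (-(π/2))..(π/2), sin θ ^ (2*n) / (1 + cos θ ^ 2))
    = 2^n * (π / Real.sqrt 2 - (π/2) * ∑ k ∈ Finset.range n, (1 / 2 ^ (3 * k)) * ((2 * k).choose k : ℝ)) := by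
  induction n with
  | zero => simpa using S0
  | succ n ih =>
    have hden : ∀ θ : ℝ, 1 + Real.cos θ ^ 2 ≠ 0 := fun θ => by nlinarith [sq_nonneg (Real.cos θ)]
    have hpt : ∀ θ : ℝ, sin θ ^ (2*(n+1)) / (1 + cos θ ^ 2)
        = 2 * (sin θ ^ (2*n) / (1 + cos θ ^ 2)) - sin θ ^ (2*n) := by
      intro θ
      have hs := Real.sin_sq_add_cos_sq θ
      have e : Real.sin θ ^ (2*(n+1)) = Real.sin θ ^ (2*n) * Real.sin θ ^ 2 := by
        rw [← pow_add]; ring_nf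
      rw [e]
      field_simp
      linear_combination (Real.sin θ ^ (2*n)) * hs
    have hint1 : IntervalIntegrable (fun θ => 2 * (sin θ ^ (2*n) / (1 + cos θ ^ 2))) volume (-(π/2)) (π/2) :=
      (continuous_const.mul (cont_f n)).intervalIntegrable _ _
    have hint2 : IntervalIntegrable (fun θ : ℝ => sin θ ^ (2*n)) volume (-(π/2)) (π/2) :=
      (Real.continuous_sin.pow _).intervalIntegrable _ _
    calc (∫ θ in (-(π/2))..(π/2), sin θ ^ (2*(n+1)) / (1 + cos θ ^ 2))
        = ∫ θ in (-(π/2))..(π/2), (2 * (sin θ ^ (2*n) / (1 + cos θ ^ 2)) - sin θ ^ (2*n)) := by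
          apply intervalIntegral.integral_congr; intro θ _; exact hpt θ
      _ = 2 * (∫ θ in (-(π/2))..(π/2), sin θ ^ (2*n) / (1 + cos θ ^ 2))
            - ∫ θ in (-(π/2))..(π/2), sin θ ^ (2*n) := by
          rw [intervalIntegral.integral_sub hint1 hint2, intervalIntegral.integral_const_mul]
      _ = 2^(n+1) * (π / Real.sqrt 2 - (π/2) * ∑ k ∈ Finset.range (n+1), (1 / 2 ^ (3 * k)) * ((2 * k).choose k : ℝ)) := by
          rw [ih, sin_pow_symm, Finset.sum_range_succ]
          have h8 : (2:ℝ) ^ (3*n) = 2^n * 4^n := by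
            rw [pow_mul]; norm_num
            rw [show (8:ℝ) = 2*4 by norm_num, mul_pow]
          rw [h8]
          have h2n : (2:ℝ)^n ≠ 0 := by positivity
          have h4n : (4:ℝ)^n ≠ 0 := by positivity
          field_simp
          ring

lemma image_sin_scaled : (fun θ : ℝ => Real.sin θ * (Real.sqrt 2)⁻¹) '' Set.Ioo (-(π/2)) (π/2)
    = Set.Ioo (-(Real.sqrt 2)⁻¹) ((Real.sqrt 2)⁻¹) := by
  have h2 : (0:ℝ) < Real.sqrt 2 := by positivity
  have hinv : (0:ℝ) < (Real.sqrt 2)⁻¹ := by positivity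
  have hmul : (Real.sqrt 2)⁻¹ * Real.sqrt 2 = 1 := inv_mul_cancel₀ h2.ne'
  ext y
  constructor
  · rintro ⟨θ, hθ, rfl⟩
    have hmem : θ ∈ Set.Icc (-(π/2)) (π/2) := Set.mem_Icc_of_Ioo hθ
    have h1 : Real.sin θ < 1 := by
      have := Real.strictMonoOn_sin hmem (Set.right_mem_Icc.2 (by linarith [Real.pi_pos])) hθ.2
      simpa using this
    have h2' : -1 < Real.sin θ := by
      have := Real.strictMonoOn_sin (Set.left_mem_Icc.2 (by linarith [Real.pi_pos])) hmem hθ.1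
      simpa using this
    constructor
    · have := mul_lt_mul_of_pos_right h2' hinv
      simpa using this
    · have := mul_lt_mul_of_pos_right h1 hinv
      simpa using this
  · rintro ⟨h1, h2'⟩
    refine ⟨Real.arcsin (y * Real.sqrt 2), ⟨?_, ?_⟩, ?_⟩
    · rw [Real.neg_pi_div_two_lt_arcsin]
      nlinarith [mul_lt_mul_of_pos_right h1 h2]
    · rw [Real.arcsin_lt_pi_div_two]
      nlinarith [mul_lt_mul_of_pos_right h2' h2]
    · show Real.sin (Real.arcsin (y * Real.sqrt 2)) * (Real.sqrt 2)⁻¹ = y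
      rw [Real.sin_arcsin]
      · field_simp
      · nlinarith [mul_lt_mul_of_pos_right h1 h2]
      · nlinarith [mul_lt_mul_of_pos_right h2' h2]

lemma subst_lemma (n : ℕ) :
    (∫ x in (-(1 / Real.sqrt 2))..(1 / Real.sqrt 2),
        x ^ (2 * n) / (Real.pi * (1 - x ^ 2) * Real.sqrt (1 - 2 * x ^ 2)))
    = (Real.sqrt 2 / (π * 2^n)) * ∫ θ in (-(π/2))..(π/2), sin θ ^ (2*n) / (1 + cos θ ^ 2) := by
  have h2 : (0:ℝ) < Real.sqrt 2 := by positivity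
  have hs2 : Real.sqrt 2 ^ 2 = 2 := Real.sq_sqrt (by norm_num)
  have hinv : (0:ℝ) < (Real.sqrt 2)⁻¹ := by positivity
  have hle : -(1 / Real.sqrt 2) ≤ 1 / Real.sqrt 2 := by
    have : (0:ℝ) ≤ 1 / Real.sqrt 2 := by positivity
    linarith
  have hle2 : -(π/2) ≤ (π/2) := by linarith [Real.pi_pos]
  rw [intervalIntegral.integral_of_le hle, intervalIntegral.integral_of_le hle2,
    MeasureTheory.integral_Ioc_eq_integral_Ioo, MeasureTheory.integral_Ioc_eq_integral_Ioo]
  have key := MeasureTheory.integral_image_eq_integral_abs_deriv_smul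
    (s := Set.Ioo (-(π/2)) (π/2)) (f := fun θ => Real.sin θ * (Real.sqrt 2)⁻¹)
    (f' := fun θ => Real.cos θ * (Real.sqrt 2)⁻¹)
    measurableSet_Ioo
    (fun x _ => ((Real.hasDerivAt_sin x).mul_const _).hasDerivWithinAt)
    (fun a ha b hb hab => by
      have := Real.injOn_sin (Set.mem_Icc_of_Ioo ha) (Set.mem_Icc_of_Ioo hb)
        (by field_simp at hab; exact hab)
      exact this)
    (fun x => x ^ (2 * n) / (Real.pi * (1 - x ^ 2) * Real.sqrt (1 - 2 * x ^ 2)))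
  rw [image_sin_scaled] at key
  rw [show -(1 / Real.sqrt 2) = -(Real.sqrt 2)⁻¹ by rw [one_div], show (1 / Real.sqrt 2) = (Real.sqrt 2)⁻¹ by rw [one_div]]
  rw [key]
  rw [← MeasureTheory.integral_const_mul]
  apply MeasureTheory.setIntegral_congr_fun measurableSet_Ioo
  intro θ hθ
  have hc : 0 < Real.cos θ := Real.cos_pos_of_mem_Ioo hθ
  have hx2 : 1 - 2 * (Real.sin θ * (Real.sqrt 2)⁻¹) ^ 2 = Real.cos θ ^ 2 := by
    have hs := Real.sin_sq_add_cos_sq θ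
    field_simp
    nlinarith [hs]
  have hsqrt : Real.sqrt (1 - 2 * (Real.sin θ * (Real.sqrt 2)⁻¹) ^ 2) = Real.cos θ := by
    rw [hx2, Real.sqrt_sq hc.le]
  have h1x : 1 - (Real.sin θ * (Real.sqrt 2)⁻¹) ^ 2 = (1 + Real.cos θ ^ 2) / 2 := by
    have hs := Real.sin_sq_add_cos_sq θ
    field_simp
    nlinarith [hs]
  have hpow : (Real.sin θ * (Real.sqrt 2)⁻¹) ^ (2*n) = Real.sin θ ^ (2*n) * (1/2^n) := by
    rw [mul_pow, pow_mul (Real.sqrt 2)⁻¹, ← Real.sqrt_inv, Real.sq_sqrt (by norm_num)]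
    rw [show ((2:ℝ)⁻¹)^n = 1/2^n by rw [inv_pow]; rw [one_div]]
  have hden : 1 + Real.cos θ ^ 2 ≠ 0 := by nlinarith [sq_nonneg (Real.cos θ)]
  have hπ : Real.pi ≠ 0 := Real.pi_ne_zero
  have h2n : (2:ℝ)^n ≠ 0 := by positivity
  simp only [smul_eq_mul, hsqrt, h1x, hpow]
  rw [abs_of_pos (by positivity)]
  field_simp
  ring_nf
  linear_combination (-(Real.sin θ ^ (n*2))) * hs2

theorem even_moments_of_limit_distribution (n : ℕ) (hn : 1 ≤ n) :
    ∫ x in (-(1 / Real.sqrt 2))..(1 / Real.sqrt 2),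
        x ^ (2 * n) / (Real.pi * (1 - x ^ 2) * Real.sqrt (1 - 2 * x ^ 2))
      = 1 - (1 / Real.sqrt 2) *
          ∑ k ∈ Finset.range n, (1 / 2 ^ (3 * k)) * ((2 * k).choose k : ℝ) := by
  rw [subst_lemma, Sval]
  set T := ∑ k ∈ Finset.range n, (1 / 2 ^ (3 * k)) * ((2 * k).choose k : ℝ) with hT
  have hs2 : Real.sqrt 2 ^ 2 = 2 := Real.sq_sqrt (by norm_num)
  have h2 : (0:ℝ) < Real.sqrt 2 := by positivity
  have hπ : Real.pi ≠ 0 := Real.pi_ne_zero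
  have h2n : (2:ℝ)^n ≠ 0 := by positivity
  field_simp
  ring_nf
  linear_combination (-T) * hs2
end

section
/- Define I_{2n} = ∫_0^{π/2} sin^{2n}θ / (1 + cos²θ) dθ for integers n ≥ 0. Then for every n ≥ 0, I_{2n+2} = 2·I_{2n} − (π/2)·C(2n,n)/4^n, where C(2n,n)/4^n = (2n−1)(2n−3)⋯1 / (2n(2n−2)⋯2) is the Wallis ratio; moreover I_0 = π/(2√2). -/
open Real

-- sin power integral lemma
lemma sinpow (n : ℕ) : ∫ θ in (0:ℝ)..(Real.pi/2), Real.sin θ ^ (2*n)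
    = Real.pi/2 * (((2*n).choose n : ℝ) / 4^n) := by
  induction n with
  | zero => simp
  | succ n ih =>
    have h := integral_sin_pow (a:=0) (b:=Real.pi/2) (2*n)
    have h2 : 2*(n+1) = 2*n+2 := by ring
    rw [h2, h, ih]
    have key : ((n:ℝ)+1) * ((2*(n+1)).choose (n+1) : ℝ) = 2*(2*n+1) * ((2*n).choose n : ℝ) := by
      have := Nat.succ_mul_centralBinom_succ n
      simp only [Nat.centralBinom] at this
      exact_mod_cast this
    simp [Real.cos_pi_div_two]
    field_simp
    rw [h2] at key
    linear_combination (-(2 * (4:ℝ)^n)) * key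

lemma contf (m : ℕ) : Continuous (fun θ : ℝ => Real.sin θ ^ m / (1 + Real.cos θ ^ 2)) := by
  apply Continuous.div (by continuity) (by continuity)
  intro x; positivity

lemma rec1 (n : ℕ) :
    ∫ θ in (0:ℝ)..(Real.pi / 2), (Real.sin θ) ^ (2 * n + 2) / (1 + (Real.cos θ) ^ 2)
      = 2 * (∫ θ in (0:ℝ)..(Real.pi / 2), (Real.sin θ) ^ (2 * n) / (1 + (Real.cos θ) ^ 2))
        - ∫ θ in (0:ℝ)..(Real.pi / 2), Real.sin θ ^ (2 * n) := by
  have hcongr : ∀ θ : ℝ, (Real.sin θ) ^ (2 * n + 2) / (1 + (Real.cos θ) ^ 2)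
      = 2 * ((Real.sin θ) ^ (2 * n) / (1 + (Real.cos θ) ^ 2)) - Real.sin θ ^ (2 * n) := by
    intro θ
    have hD : (1 : ℝ) + Real.cos θ ^ 2 ≠ 0 := by positivity
    have hs : Real.sin θ ^ 2 = 1 - Real.cos θ ^ 2 := Real.sin_sq θ
    field_simp
    linear_combination (Real.sin θ ^ (2 * n)) * hs
  have h1 : IntervalIntegrable (fun θ : ℝ => 2 * ((Real.sin θ) ^ (2*n) / (1 + Real.cos θ ^ 2)))
      MeasureTheory.volume 0 (Real.pi/2) := (continuous_const.mul (contf (2*n))).intervalIntegrable _ _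
  have h2 : IntervalIntegrable (fun θ : ℝ => Real.sin θ ^ (2*n))
      MeasureTheory.volume 0 (Real.pi/2) := (by continuity : Continuous fun θ : ℝ => Real.sin θ ^ (2*n)).intervalIntegrable _ _
  calc ∫ θ in (0:ℝ)..(Real.pi / 2), (Real.sin θ) ^ (2 * n + 2) / (1 + (Real.cos θ) ^ 2)
      = ∫ θ in (0:ℝ)..(Real.pi / 2), (2 * ((Real.sin θ) ^ (2*n) / (1 + Real.cos θ ^ 2)) - Real.sin θ ^ (2*n)) := by
        apply intervalIntegral.integral_congr; intro θ _; exact hcongr θ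
    _ = _ := by
        rw [intervalIntegral.integral_sub h1 h2, intervalIntegral.integral_const_mul]

noncomputable def F (θ : ℝ) : ℝ :=
  θ / Real.sqrt 2 - (1 / Real.sqrt 2) *
    Real.arctan (Real.sin (2 * θ) / (Real.cos (2 * θ) + (3 + 2 * Real.sqrt 2)))

lemma hasDerivF (θ : ℝ) : HasDerivAt F (1 / (1 + Real.cos θ ^ 2)) θ := by
  have h2 : (0:ℝ) < Real.sqrt 2 := Real.sqrt_pos.mpr (by norm_num)
  have hs : Real.sqrt 2 ^ 2 = 2 := Real.sq_sqrt (by norm_num)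
  have hden : Real.cos (2 * θ) + (3 + 2 * Real.sqrt 2) ≠ 0 := by
    nlinarith [Real.neg_one_le_cos (2 * θ)]
  have hlin : HasDerivAt (fun x : ℝ => 2 * x) 2 θ := by
    simpa using (hasDerivAt_id θ).const_mul 2
  have hsin : HasDerivAt (fun x : ℝ => Real.sin (2 * x)) (Real.cos (2 * θ) * 2) θ := by
    exact hlin.sin
  have hcos : HasDerivAt (fun x : ℝ => Real.cos (2 * x) + (3 + 2 * Real.sqrt 2))
      (-Real.sin (2 * θ) * 2) θ := by
    have : HasDerivAt (fun x : ℝ => Real.cos (2 * x)) (-Real.sin (2 * θ) * 2) θ := by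
      exact hlin.cos
    exact this.add_const _
  have hq : HasDerivAt (fun x : ℝ => Real.sin (2 * x) / (Real.cos (2 * x) + (3 + 2 * Real.sqrt 2)))
      ((Real.cos (2 * θ) * 2 * (Real.cos (2 * θ) + (3 + 2 * Real.sqrt 2))
        - Real.sin (2 * θ) * (-Real.sin (2 * θ) * 2)) / (Real.cos (2 * θ) + (3 + 2 * Real.sqrt 2)) ^ 2) θ :=
    hsin.div hcos hden
  have ha := (Real.hasDerivAt_arctan (Real.sin (2 * θ) / (Real.cos (2 * θ) + (3 + 2 * Real.sqrt 2)))).comp θ hq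
  have hF := ((hasDerivAt_id θ).div_const (Real.sqrt 2)).sub (ha.const_mul (1 / Real.sqrt 2))
  refine hF.congr_deriv ?_
  symm
  have hc2 : Real.cos (2 * θ) = 2 * Real.cos θ ^ 2 - 1 := Real.cos_two_mul θ
  have hs2 : Real.sin (2 * θ) ^ 2 = 1 - Real.cos (2 * θ) ^ 2 := Real.sin_sq (2 * θ)
  set c := Real.cos θ
  set r := Real.sqrt 2
  set s := Real.sin (2 * θ)
  rw [hc2] at hs2 hden ⊢
  have hpos : (0:ℝ) < 1 + c ^ 2 := by positivity
  have hgpos : (0:ℝ) < 1 + (s / (2 * c ^ 2 - 1 + (3 + 2 * r))) ^ 2 := by positivity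
  set D := 2 * c ^ 2 - 1 + (3 + 2 * r) with hDdef
  field_simp
  rw [hDdef]
  linear_combination (r + 1 + c ^ 2) * hs2 + (4 * (c ^ 2 + 1 + r)) * hs

lemma I0 : (∫ θ in (0:ℝ)..(Real.pi / 2), (Real.sin θ) ^ (2 * 0) / (1 + (Real.cos θ) ^ 2))
    = Real.pi / (2 * Real.sqrt 2) := by
  have h2 : Real.sqrt 2 ≠ 0 := by positivity
  have hint : IntervalIntegrable (fun θ : ℝ => 1 / (1 + Real.cos θ ^ 2))
      MeasureTheory.volume 0 (Real.pi / 2) := by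
    apply Continuous.intervalIntegrable
    apply Continuous.div continuous_const (by continuity)
    intro x; positivity
  have := intervalIntegral.integral_eq_sub_of_hasDerivAt
    (f := F) (f' := fun θ => 1 / (1 + Real.cos θ ^ 2)) (a := 0) (b := Real.pi / 2)
    (fun x _ => hasDerivF x) hint
  simp only [pow_zero, Nat.mul_zero]
  calc (∫ θ in (0:ℝ)..(Real.pi / 2), (Real.sin θ) ^ (2 * 0) / (1 + (Real.cos θ) ^ 2))
      = ∫ θ in (0:ℝ)..(Real.pi / 2), 1 / (1 + Real.cos θ ^ 2) := by
        apply intervalIntegral.integral_congr; intro θ _; norm_num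
    _ = F (Real.pi / 2) - F 0 := this
    _ = Real.pi / (2 * Real.sqrt 2) := by
        simp [F, Real.sin_pi, Real.cos_pi, mul_div_cancel₀]
        ring

theorem wallis_type_recurrence :
    (∀ n : ℕ,
      ∫ θ in (0:ℝ)..(Real.pi / 2), (Real.sin θ) ^ (2 * n + 2) / (1 + (Real.cos θ) ^ 2)
        = 2 * (∫ θ in (0:ℝ)..(Real.pi / 2), (Real.sin θ) ^ (2 * n) / (1 + (Real.cos θ) ^ 2))
          - (Real.pi / 2) * (((2 * n).choose n : ℝ) / 4 ^ n)) ∧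
    (∫ θ in (0:ℝ)..(Real.pi / 2), (Real.sin θ) ^ (2 * 0) / (1 + (Real.cos θ) ^ 2)
        = Real.pi / (2 * Real.sqrt 2)) := by
  refine ⟨fun n => ?_, I0⟩
  rw [rec1 n, sinpow n]
end
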